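/- arXiv:2408.01899 — 15 statements merged into one kernel-verified Lean document; each statement's English description precedes it below -/
import Mathlib

section
/- Let n ≥ 1, let ϑ ∈ ℝ^n be a weight vector, and let x ∈ ℝ^n. If there is no x* ∈ {x_1,…,x_n} satisfying ∑_{i : x_i < x*} ϑ_i < 1/2, ∑_{i : x_i = x*} ϑ_i > 0, and ∑_{i : x_i > x*} ϑ_i < 1/2, then there exists z ∈ {x_1,…,x_n} such that ∑_{i : x_i < z} ϑ_i = ∑_{i : x_i ≥ z} ϑ_i = 1/2, and the weighted median of x associated with ϑ is not unique: there exist two distinct weighted medians of x associated with ϑ. -/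
open Finset Filter

/-- `m` is a weighted median of `x` associated with weight vector `ϑ`. -/
def IsWeightedMedian {n : ℕ} (ϑ : Fin n → ℝ) (x : Fin n → ℝ) (m : ℝ) : Prop :=
  (∃ i, x i = m) ∧
    (∑ i ∈ Finset.univ.filter (fun i => x i < m), ϑ i) ≤ 1 / 2 ∧
    (∑ i ∈ Finset.univ.filter (fun i => m < x i), ϑ i) ≤ 1 / 2

/-- if no point satisfies the strict conditions, there is a tie point `z`
and the weighted median is not unique. -/
theorem weighted_median_not_unique (n : ℕ) (hn : 1 ≤ n) (ϑ x : Fin n → ℝ)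
    (hϑ0 : ∀ i, 0 ≤ ϑ i) (hϑ1 : ∑ i, ϑ i = 1)
    (hno : ¬ ∃ xs : ℝ, (∃ i, x i = xs) ∧
        (∑ i ∈ Finset.univ.filter (fun i => x i < xs), ϑ i) < 1 / 2 ∧
        0 < (∑ i ∈ Finset.univ.filter (fun i => x i = xs), ϑ i) ∧
        (∑ i ∈ Finset.univ.filter (fun i => xs < x i), ϑ i) < 1 / 2) :
    (∃ z : ℝ, (∃ i, x i = z) ∧
        (∑ i ∈ Finset.univ.filter (fun i => x i < z), ϑ i) = 1 / 2 ∧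
        (∑ i ∈ Finset.univ.filter (fun i => z ≤ x i), ϑ i) = 1 / 2) ∧
    ∃ m₁ m₂ : ℝ, m₁ ≠ m₂ ∧ IsWeightedMedian ϑ x m₁ ∧ IsWeightedMedian ϑ x m₂ := by
  classical
  push_neg at hno
  set L : ℝ → ℝ := fun v => ∑ i ∈ Finset.univ.filter (fun i => x i < v), ϑ i with hLdef
  set E : ℝ → ℝ := fun v => ∑ i ∈ Finset.univ.filter (fun i => x i = v), ϑ i with hEdef
  set G : ℝ → ℝ := fun v => ∑ i ∈ Finset.univ.filter (fun i => v < x i), ϑ i with hGdef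
  have hnn : ∀ s : Finset (Fin n), 0 ≤ ∑ i ∈ s, ϑ i :=
    fun s => Finset.sum_nonneg fun i _ => hϑ0 i
  -- L v + (∑ over z ≤ x i) = 1
  have hcompl : ∀ v : ℝ, L v + (∑ i ∈ Finset.univ.filter (fun i => v ≤ x i), ϑ i) = 1 := by
    intro v
    rw [← hϑ1]
    have h := Finset.sum_filter_add_sum_filter_not Finset.univ (fun i => x i < v) ϑ
    simpa [not_lt] using h
  have hge_split : ∀ v : ℝ,
      (∑ i ∈ Finset.univ.filter (fun i => v ≤ x i), ϑ i) = E v + G v := by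
    intro v
    have h := Finset.sum_filter_add_sum_filter_not
      (Finset.univ.filter (fun i => v ≤ x i)) (fun i => x i = v) ϑ
    rw [Finset.filter_filter, Finset.filter_filter] at h
    have e1 : Finset.univ.filter (fun i => v ≤ x i ∧ x i = v)
        = Finset.univ.filter (fun i => x i = v) := by
      ext i
      simp only [Finset.mem_filter, Finset.mem_univ, true_and]
      exact ⟨fun h => h.2, fun h => ⟨le_of_eq h.symm, h⟩⟩
    have e2 : Finset.univ.filter (fun i => v ≤ x i ∧ ¬ x i = v)
        = Finset.univ.filter (fun i => v < x i) := by
      ext i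
      simp only [Finset.mem_filter, Finset.mem_univ, true_and]
      exact ⟨fun h => lt_of_le_of_ne h.1 (Ne.symm h.2),
        fun h => ⟨le_of_lt h, fun he => absurd he.le (not_le.2 h)⟩⟩
    rw [e1, e2] at h
    exact h.symm
  -- there is an index of positive weight
  obtain ⟨j0, _, hj0⟩ := Finset.exists_ne_zero_of_sum_ne_zero
    (by rw [hϑ1]; norm_num : (∑ i, ϑ i) ≠ 0)
  have hSne : (Finset.univ.filter (fun i => 0 < ϑ i)).Nonempty :=
    ⟨j0, Finset.mem_filter.2 ⟨Finset.mem_univ _, lt_of_le_of_ne (hϑ0 j0) (Ne.symm hj0)⟩⟩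
  obtain ⟨j, hjS, hjmax⟩ := Finset.exists_max_image _ x hSne
  have hGj0 : G (x j) = 0 := by
    apply Finset.sum_eq_zero
    intro i hi
    by_contra h
    have hpos : 0 < ϑ i := lt_of_le_of_ne (hϑ0 i) (Ne.symm h)
    have := hjmax i (Finset.mem_filter.2 ⟨Finset.mem_univ i, hpos⟩)
    exact absurd (Finset.mem_filter.1 hi).2 (not_lt.2 this)
  have hEj : 0 < E (x j) := by
    have hmem : j ∈ Finset.univ.filter (fun i => x i = x j) :=
      Finset.mem_filter.2 ⟨Finset.mem_univ j, rfl⟩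
    have h1 := Finset.single_le_sum (f := ϑ) (fun i _ => hϑ0 i) hmem
    have h2 : 0 < ϑ j := (Finset.mem_filter.1 hjS).2
    exact lt_of_lt_of_le h2 h1
  have hTj : 1/2 ≤ L (x j) := by
    by_contra h
    push_neg at h
    have h2 : 1/2 ≤ G (x j) := hno (x j) ⟨j, rfl⟩ h hEj
    rw [hGj0] at h2
    linarith
  -- z : minimal value with L ≥ 1/2
  have hTne : (Finset.univ.filter (fun i => 1/2 ≤ L (x i))).Nonempty :=
    ⟨j, Finset.mem_filter.2 ⟨Finset.mem_univ j, hTj⟩⟩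
  obtain ⟨jz, hjzT, hjzmin⟩ := Finset.exists_min_image _ x hTne
  set z := x jz with hz
  have hLz_ge : 1/2 ≤ L z := (Finset.mem_filter.1 hjzT).2
  -- w : maximal value below z
  have hBne : (Finset.univ.filter (fun i => x i < z)).Nonempty := by
    obtain ⟨i, hi, _⟩ := Finset.exists_ne_zero_of_sum_ne_zero
      (by intro h; rw [hLdef] at hLz_ge; simp only at hLz_ge; rw [h] at hLz_ge; linarith :
        (∑ i ∈ Finset.univ.filter (fun i => x i < z), ϑ i) ≠ 0)
    exact ⟨i, hi⟩
  obtain ⟨k, hkB, hkmax⟩ := Finset.exists_max_image _ x hBne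
  set w := x k with hw
  have hwz : w < z := (Finset.mem_filter.1 hkB).2
  -- filter identities
  have e_lt : Finset.univ.filter (fun i => x i < z) = Finset.univ.filter (fun i => x i ≤ w) := by
    ext i
    simp only [Finset.mem_filter, Finset.mem_univ, true_and]
    exact ⟨fun h => hkmax i (Finset.mem_filter.2 ⟨Finset.mem_univ i, h⟩),
      fun h => lt_of_le_of_lt h hwz⟩
  have e_gt : Finset.univ.filter (fun i => w < x i) = Finset.univ.filter (fun i => z ≤ x i) := by
    ext i
    simp only [Finset.mem_filter, Finset.mem_univ, true_and]
    constructor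
    · intro h
      by_contra h'
      push_neg at h'
      exact absurd (hkmax i (Finset.mem_filter.2 ⟨Finset.mem_univ i, h'⟩)) (not_le.2 h)
    · intro h
      exact lt_of_lt_of_le hwz h
  -- L z = L w + E w
  have hLz_split : L z = L w + E w := by
    have h := Finset.sum_filter_add_sum_filter_not
      (Finset.univ.filter (fun i => x i ≤ w)) (fun i => x i < w) ϑ
    rw [Finset.filter_filter, Finset.filter_filter] at h
    have f1 : Finset.univ.filter (fun i => x i ≤ w ∧ x i < w)
        = Finset.univ.filter (fun i => x i < w) := by
      ext i
      simp only [Finset.mem_filter, Finset.mem_univ, true_and]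
      exact ⟨fun h => h.2, fun h => ⟨le_of_lt h, h⟩⟩
    have f2 : Finset.univ.filter (fun i => x i ≤ w ∧ ¬ x i < w)
        = Finset.univ.filter (fun i => x i = w) := by
      ext i
      simp only [Finset.mem_filter, Finset.mem_univ, true_and, not_lt]
      exact ⟨fun h => le_antisymm h.1 h.2, fun h => ⟨le_of_eq h, le_of_eq h.symm⟩⟩
    rw [f1, f2] at h
    show (∑ i ∈ Finset.univ.filter (fun i => x i < z), ϑ i) = _
    rw [e_lt, ← h]
  have hLw : L w < 1/2 := by
    by_contra h
    push_neg at h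
    have h2 : z ≤ w := hjzmin k (Finset.mem_filter.2 ⟨Finset.mem_univ k, h⟩)
    linarith
  -- G w = ∑ over z ≤ x i
  have hGw_eq : G w = ∑ i ∈ Finset.univ.filter (fun i => z ≤ x i), ϑ i := by
    show (∑ i ∈ Finset.univ.filter (fun i => w < x i), ϑ i) = _
    rw [e_gt]
  have hLz : L z = 1/2 := by
    by_contra h
    have hlt : 1/2 < L z := lt_of_le_of_ne hLz_ge (Ne.symm h)
    have hEwpos : 0 < E w := by linarith
    have hGw : G w = 1 - L z := by
      have h1 := hcompl w
      have h2 := hge_split w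
      linarith
    have h2 : 1/2 ≤ G w := hno w ⟨k, rfl⟩ hLw hEwpos
    rw [hGw] at h2
    linarith
  have hge_z : (∑ i ∈ Finset.univ.filter (fun i => z ≤ x i), ϑ i) = 1/2 := by
    have := hcompl z
    linarith
  have hGw : G w = 1/2 := by rw [hGw_eq, hge_z]
  have hGz : G z ≤ 1/2 := by
    have h1 := hge_split z
    have h2 : 0 ≤ E z := hnn _
    linarith
  refine ⟨⟨z, ⟨jz, rfl⟩, hLz, hge_z⟩,
    w, z, ne_of_lt hwz, ⟨⟨k, rfl⟩, ?_, ?_⟩, ⟨⟨jz, rfl⟩, ?_, ?_⟩⟩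
  · show L w ≤ 1/2
    have : 0 ≤ E w := hnn _
    linarith
  · show G w ≤ 1/2
    linarith
  · show L z ≤ 1/2
    linarith
  · show G z ≤ 1/2
    exact hGz
end

section
/- Let W be an n×n row-stochastic nonnegative matrix and let Med(·;W) be a median selection for W. Then the weighted median mapping is non-expansive in the infinity norm: for all x, y ∈ ℝ^n, ‖Med(x;W) − Med(y;W)‖_∞ ≤ ‖x − y‖_∞. -/
open Finset Filter

/-- `W` is a nonnegative row-stochastic matrix. -/
def RowStochastic {n : ℕ} (W : Matrix (Fin n) (Fin n) ℝ) : Prop :=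
  (∀ i j, 0 ≤ W i j) ∧ ∀ i, ∑ j, W i j = 1

/-- `Med` is a median selection for `W`: `Med x i` is a weighted median of `x`
associated with the `i`-th row of `W` which is closest to `x i` among all such
weighted medians. -/
def IsMedianSelection {n : ℕ} (W : Matrix (Fin n) (Fin n) ℝ)
    (Med : (Fin n → ℝ) → Fin n → ℝ) : Prop :=
  ∀ x i, IsWeightedMedian (W i) x (Med x i) ∧
    ∀ m, IsWeightedMedian (W i) x m → |Med x i - x i| ≤ |m - x i|

lemma wm_neg {n : ℕ} {ϑ x : Fin n → ℝ} {m : ℝ} (h : IsWeightedMedian ϑ x m) :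
    IsWeightedMedian ϑ (-x) (-m) := by
  obtain ⟨⟨i, hi⟩, h1, h2⟩ := h
  refine ⟨⟨i, by simp [hi]⟩, ?_, ?_⟩
  · have he : (univ.filter (fun i => (-x) i < -m)) = (univ.filter (fun i => m < x i)) := by
      apply Finset.filter_congr; intro j _; simp
    rw [he]; exact h2
  · have he : (univ.filter (fun i => -m < (-x) i)) = (univ.filter (fun i => x i < m)) := by
      apply Finset.filter_congr; intro j _; simp
    rw [he]; exact h1

lemma wm_sandwich {n : ℕ} {ϑ x : Fin n → ℝ} {m1 m2 : ℝ} (hpos : ∀ j, 0 ≤ ϑ j)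
    (h1 : IsWeightedMedian ϑ x m1) (h2 : IsWeightedMedian ϑ x m2)
    (j : Fin n) (hj1 : m1 ≤ x j) (hj2 : x j ≤ m2) :
    IsWeightedMedian ϑ x (x j) := by
  refine ⟨⟨j, rfl⟩, ?_, ?_⟩
  · refine le_trans (Finset.sum_le_sum_of_subset_of_nonneg ?_ (fun k _ _ => hpos k)) h2.2.1
    intro k hk
    simp only [mem_filter, mem_univ, true_and] at hk ⊢
    exact lt_of_lt_of_le hk hj2
  · refine le_trans (Finset.sum_le_sum_of_subset_of_nonneg ?_ (fun k _ _ => hpos k)) h1.2.2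
    intro k hk
    simp only [mem_filter, mem_univ, true_and] at hk ⊢
    exact lt_of_le_of_lt hj1 hk

/-- Transfer lemma: if `b` is a weighted median of `y` and `x` is within `c` of `y`
coordinatewise, then `x` has a weighted median `≤ b + c` (given that `x` has some
weighted median `a`). -/
lemma wm_transfer {n : ℕ} {ϑ x y : Fin n → ℝ} {a b c : ℝ} (hpos : ∀ j, 0 ≤ ϑ j)
    (hxy : ∀ j, |x j - y j| ≤ c)
    (ha : IsWeightedMedian ϑ x a) (hb : IsWeightedMedian ϑ y b) :
    ∃ m, IsWeightedMedian ϑ x m ∧ m ≤ b + c := by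
  obtain ⟨j0, hj0⟩ := hb.1
  set S := univ.filter (fun j => x j ≤ b + c) with hS
  have hS0 : j0 ∈ S := by
    simp only [hS, mem_filter, mem_univ, true_and]
    have := hxy j0
    rw [abs_le] at this
    linarith [this.2, hj0.le, hj0.ge]
  obtain ⟨j', hj'S, hj'max⟩ := Finset.exists_max_image S x ⟨j0, hS0⟩
  have hj'le : x j' ≤ b + c := by
    simpa only [hS, mem_filter, mem_univ, true_and] using hj'S
  have hupper : (∑ k ∈ univ.filter (fun k => x j' < x k), ϑ k) ≤ 1 / 2 := by
    refine le_trans (Finset.sum_le_sum_of_subset_of_nonneg ?_ (fun k _ _ => hpos k)) hb.2.2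
    intro k hk
    simp only [mem_filter, mem_univ, true_and] at hk ⊢
    have hkS : k ∉ S := by
      intro hmem
      exact absurd (hj'max k hmem) (not_le.mpr hk)
    have hkx : b + c < x k := by
      by_contra hc
      exact hkS (by simp only [hS, mem_filter, mem_univ, true_and]; linarith)
    have := hxy k
    rw [abs_le] at this
    linarith [this.1]
  by_cases hlow : (∑ k ∈ univ.filter (fun k => x k < x j'), ϑ k) ≤ 1 / 2
  · exact ⟨x j', ⟨⟨j', rfl⟩, hlow, hupper⟩, hj'le⟩
  · refine ⟨a, ha, ?_⟩
    push_neg at hlow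
    have hax : a ≤ x j' := by
      by_contra hc
      push_neg at hc
      have hsub : (∑ k ∈ univ.filter (fun k => x k < x j'), ϑ k) ≤
          (∑ k ∈ univ.filter (fun k => x k < a), ϑ k) := by
        refine Finset.sum_le_sum_of_subset_of_nonneg ?_ (fun k _ _ => hpos k)
        intro k hk
        simp only [mem_filter, mem_univ, true_and] at hk ⊢
        linarith
      linarith [ha.2.1]
    linarith

/-- If `a` is the weighted median of `x` closest to `x i` and there exists a
weighted median `m < a`, then `a ≤ x i`. -/
lemma wm_le_self {n : ℕ} {ϑ x : Fin n → ℝ} {a m : ℝ} (hpos : ∀ j, 0 ≤ ϑ j) (i : Fin n)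
    (ha : IsWeightedMedian ϑ x a)
    (hamin : ∀ m', IsWeightedMedian ϑ x m' → |a - x i| ≤ |m' - x i|)
    (hm : IsWeightedMedian ϑ x m) (hma : m < a) : a ≤ x i := by
  by_contra h
  push_neg at h
  rcases le_or_gt m (x i) with h1 | h1
  · have hmed : IsWeightedMedian ϑ x (x i) := wm_sandwich hpos hm ha i h1 h.le
    have h2 := hamin _ hmed
    rw [sub_self, abs_zero, abs_nonpos_iff, sub_eq_zero] at h2
    linarith
  · have h2 := hamin m hm
    rw [abs_of_pos (by linarith), abs_of_pos (by linarith)] at h2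
    linarith

/-- One-sided closeness of closest-median selections. -/
lemma wm_close {n : ℕ} {ϑ x y : Fin n → ℝ} {c : ℝ} (hpos : ∀ j, 0 ≤ ϑ j)
    (hxy : ∀ j, |x j - y j| ≤ c) (i : Fin n) {a b : ℝ}
    (ha : IsWeightedMedian ϑ x a)
    (hamin : ∀ m, IsWeightedMedian ϑ x m → |a - x i| ≤ |m - x i|)
    (hb : IsWeightedMedian ϑ y b)
    (hbmin : ∀ m, IsWeightedMedian ϑ y m → |b - y i| ≤ |m - y i|) :
    a ≤ b + c := by
  by_contra hcon
  push_neg at hcon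
  obtain ⟨m, hm, hmle⟩ := wm_transfer hpos hxy ha hb
  have hxi : a ≤ x i := wm_le_self hpos i ha hamin hm (lt_of_le_of_lt hmle hcon)
  have hyi : b < y i := by
    have := hxy i
    rw [abs_le] at this
    linarith [this.2]
  have hxyneg : ∀ j, |(-y) j - (-x) j| ≤ c := by
    intro j
    have he : (-y) j - (-x) j = x j - y j := by simp; ring
    rw [he]; exact hxy j
  obtain ⟨m0, hm0, hm0le⟩ := wm_transfer hpos hxyneg (wm_neg hb) (wm_neg ha)
  have hbneg_min : ∀ m', IsWeightedMedian ϑ (-y) m' →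
      |(-b) - (-y) i| ≤ |m' - (-y) i| := by
    intro m' hm'
    have hm'' : IsWeightedMedian ϑ y (-m') := by
      have h3 := wm_neg hm'
      rwa [neg_neg] at h3
    have h4 := hbmin _ hm''
    have e1 : |(-b) - (-y) i| = |b - y i| := by
      rw [show (-b) - (-y) i = -(b - y i) by simp; ring, abs_neg]
    have e2 : |m' - (-y) i| = |(-m') - y i| := by
      rw [show m' - (-y) i = -((-m') - y i) by simp; ring, abs_neg]
    rw [e1, e2]
    exact h4
  have hfin : -b ≤ (-y) i := by
    refine wm_le_self hpos i (wm_neg hb) hbneg_min hm0 ?_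
    linarith
  simp only [Pi.neg_apply] at hfin
  linarith

/-- the weighted median mapping is non-expansive in the infinity norm. -/
theorem median_selection_nonexpansive (n : ℕ) (W : Matrix (Fin n) (Fin n) ℝ)
    (hW : RowStochastic W) (Med : (Fin n → ℝ) → Fin n → ℝ)
    (hMed : IsMedianSelection W Med) (x y : Fin n → ℝ) :
    ‖Med x - Med y‖ ≤ ‖x - y‖ := by
  have hc : (0:ℝ) ≤ ‖x - y‖ := norm_nonneg _
  rw [pi_norm_le_iff_of_nonneg hc]
  intro i
  have hxy : ∀ j, |x j - y j| ≤ ‖x - y‖ := by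
    intro j
    calc |x j - y j| = ‖(x - y) j‖ := by simp [Real.norm_eq_abs]
      _ ≤ ‖x - y‖ := norm_le_pi_norm _ j
  have hyx : ∀ j, |y j - x j| ≤ ‖x - y‖ := fun j => by rw [abs_sub_comm]; exact hxy j
  obtain ⟨hax, haxmin⟩ := hMed x i
  obtain ⟨hay, haymin⟩ := hMed y i
  have h1 := wm_close (hW.1 i) hxy i hax haxmin hay haymin
  have h2 := wm_close (hW.1 i) hyx i hay haymin hax haxmin
  simp only [Pi.sub_apply, Real.norm_eq_abs]
  rw [abs_le]
  constructor <;> linarith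
end

section
/- (Theorem 1(i): convergence and convergence rate of the weighted-median prejudice opinion dynamics.) Let W be an n×n row-stochastic nonnegative matrix, let Med(·;W) be a median selection for W, let λ_i ∈ (0,1] and u_i ∈ ℝ for all i ∈ {1,…,n}, and set λ_min := min_i λ_i, Λ := diag(λ_1,…,λ_n). Then there exists a vector x* ∈ ℝ^n, depending only on W, Λ, u and the median selection (namely the unique fixed point of F(x) := Λu + (I_n − Λ)Med(x;W)), such that every trajectory of the dynamics x(t+1) = Λu + (I_n − Λ)Med(x(t);W) satisfies ‖x(t) − x*‖_∞ ≤ (1 − λ_min)^t · ‖x(0) − x*‖_∞ for every initial state x(0) ∈ ℝ^n and every t ∈ ℕ; in particular lim_{t→∞} x(t) = x*. -/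
open Finset Filter

lemma med_key {n : ℕ} (ϑ x y : Fin n → ℝ) (i : Fin n)
    (hϑ : ∀ j, 0 ≤ ϑ j) (hsum : ∑ j, ϑ j = 1)
    (a b c : ℝ) (hc : ∀ j, |x j - y j| ≤ c)
    (ha : IsWeightedMedian ϑ x a)
    (ha' : ∀ m, IsWeightedMedian ϑ x m → |a - x i| ≤ |m - x i|)
    (hb : IsWeightedMedian ϑ y b)
    (hb' : ∀ m, IsWeightedMedian ϑ y m → |b - y i| ≤ |m - y i|) :
    a - b ≤ c := by
  by_contra h
  push_neg at h
  -- h : c < a - b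
  have hxy : ∀ j, x j - c ≤ y j ∧ y j ≤ x j + c := by
    intro j
    have := abs_le.mp (hc j)
    constructor <;> linarith [this.1, this.2]
  have hba : b + c < a := by linarith
  have subset_sum : ∀ (p q : Fin n → Prop) [DecidablePred p] [DecidablePred q],
      (∀ j, p j → q j) →
      (∑ j ∈ univ.filter q, ϑ j) ≤ 1/2 → (∑ j ∈ univ.filter p, ϑ j) ≤ 1/2 := by
    intro p q _ _ hpq hq
    refine le_trans (Finset.sum_le_sum_of_subset_of_nonneg ?_ (fun j _ _ => hϑ j)) hq
    intro j hj
    simp only [mem_filter, mem_univ, true_and] at hj ⊢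
    exact hpq j hj
  by_cases hxi : x i ≤ b + c
  · -- Case A: take the largest x-value ≤ b + c; it is a median of x closer to x i than a
    obtain ⟨j0, hj0S, hmax⟩ := Finset.exists_max_image (univ.filter fun j => x j ≤ b + c) x
      ⟨i, by simp [hxi]⟩
    simp only [mem_filter, mem_univ, true_and] at hj0S
    have hv_med : IsWeightedMedian ϑ x (x j0) := by
      refine ⟨⟨j0, rfl⟩, ?_, ?_⟩
      · exact subset_sum _ (fun j => x j < a) (fun j hj => lt_of_lt_of_le hj (by linarith)) ha.2.1
      · refine subset_sum _ (fun j => b < y j) ?_ hb.2.2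
        intro j hj
        have : ¬ (x j ≤ b + c) := by
          intro hle
          have := hmax j (by simp [hle])
          linarith
        linarith [(hxy j).1]
    have hxile : x i ≤ x j0 := hmax i (by simp [hxi])
    have := ha' _ hv_med
    rw [abs_of_nonneg (by linarith : (0:ℝ) ≤ a - x i),
      abs_of_nonneg (by linarith : (0:ℝ) ≤ x j0 - x i)] at this
    linarith
  · push_neg at hxi
    by_cases hxa : x i < a
    · -- Case B1: x i itself is a median of x
      have hmed : IsWeightedMedian ϑ x (x i) := by
        refine ⟨⟨i, rfl⟩, ?_, ?_⟩
        · exact subset_sum _ (fun j => x j < a) (fun j hj => lt_trans hj hxa) ha.2.1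
        · exact subset_sum _ (fun j => b < y j) (fun j hj => by linarith [(hxy j).1]) hb.2.2
      have := ha' _ hmed
      simp only [sub_self, abs_zero] at this
      have h0 : a - x i = 0 := abs_eq_zero.mp (le_antisymm this (abs_nonneg _))
      linarith
    · -- Case B2: x i ≥ a, so y i > b; the smallest y-value > b is a median of y
      push_neg at hxa
      have hyi : b < y i := by linarith [(hxy i).1]
      -- fact (1): ∑_{y > b} = 1/2
      have hsplit : (∑ j ∈ univ.filter fun j => x j < a, ϑ j)
          + (∑ j ∈ univ.filter fun j => ¬ x j < a, ϑ j) = 1 := by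
        rw [Finset.sum_filter_add_sum_filter_not]; exact hsum
      have hge : (1:ℝ)/2 ≤ ∑ j ∈ univ.filter fun j => ¬ x j < a, ϑ j := by
        linarith [ha.2.1]
      have hsub : (∑ j ∈ univ.filter fun j => ¬ x j < a, ϑ j)
          ≤ ∑ j ∈ univ.filter fun j => b < y j, ϑ j := by
        refine Finset.sum_le_sum_of_subset_of_nonneg ?_ (fun j _ _ => hϑ j)
        intro j hj
        simp only [mem_filter, mem_univ, true_and, not_lt] at hj ⊢
        linarith [(hxy j).1]
      have hfact : (∑ j ∈ univ.filter fun j => b < y j, ϑ j) = 1/2 :=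
        le_antisymm hb.2.2 (le_trans hge hsub)
      have hfact' : (∑ j ∈ univ.filter fun j => ¬ b < y j, ϑ j) = 1/2 := by
        have := Finset.sum_filter_add_sum_filter_not univ (fun j => b < y j) ϑ
        rw [hsum, hfact] at this
        linarith
      obtain ⟨j0, hj0S, hmin⟩ := Finset.exists_min_image (univ.filter fun j => b < y j) y
        ⟨i, by simp [hyi]⟩
      simp only [mem_filter, mem_univ, true_and] at hj0S
      have hw_med : IsWeightedMedian ϑ y (y j0) := by
        refine ⟨⟨j0, rfl⟩, ?_, ?_⟩
        · refine le_of_le_of_eq (Finset.sum_le_sum_of_subset_of_nonneg ?_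
            (fun j _ _ => hϑ j)) hfact'
          intro j hj
          simp only [mem_filter, mem_univ, true_and, not_lt] at hj ⊢
          by_contra hgt
          push_neg at hgt
          have := hmin j (by simp [hgt])
          linarith
        · exact subset_sum _ (fun j => b < y j) (fun j hj => lt_trans hj0S hj) hb.2.2
      have hwle : y j0 ≤ y i := hmin i (by simp [hyi])
      have := hb' _ hw_med
      rw [abs_of_nonpos (by linarith : b - y i ≤ 0),
        abs_of_nonpos (by linarith : y j0 - y i ≤ 0)] at this
      linarith
lemma med_lip {n : ℕ} (W : Matrix (Fin n) (Fin n) ℝ) (hW : RowStochastic W)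
    (Med : (Fin n → ℝ) → Fin n → ℝ) (hMed : IsMedianSelection W Med)
    (x y : Fin n → ℝ) (i : Fin n) (c : ℝ) (hc : ∀ j, |x j - y j| ≤ c) :
    |Med x i - Med y i| ≤ c := by
  have hc' : ∀ j, |y j - x j| ≤ c := fun j => (abs_sub_comm (y j) (x j)) ▸ hc j
  rw [abs_sub_le_iff]
  exact ⟨med_key (W i) x y i (hW.1 i) (hW.2 i) _ _ c hc (hMed x i).1 (hMed x i).2
      (hMed y i).1 (hMed y i).2,
    med_key (W i) y x i (hW.1 i) (hW.2 i) _ _ c hc' (hMed y i).1 (hMed y i).2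
      (hMed x i).1 (hMed x i).2⟩

/-- Theorem 1(i): convergence and convergence rate of the weighted-median
prejudice opinion dynamics `x(t+1) = Λu + (I - Λ) Med(x(t); W)`. -/
theorem prejudice_dynamics_convergence (n : ℕ) (hn : 0 < n)
    (W : Matrix (Fin n) (Fin n) ℝ) (hW : RowStochastic W)
    (Med : (Fin n → ℝ) → Fin n → ℝ) (hMed : IsMedianSelection W Med)
    (lam u : Fin n → ℝ) (hlam : ∀ i, lam i ∈ Set.Ioc (0 : ℝ) 1) :
    ∃ xs : Fin n → ℝ,
      (∀ i, xs i = lam i * u i + (1 - lam i) * Med xs i) ∧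
      (∀ y : Fin n → ℝ, (∀ i, y i = lam i * u i + (1 - lam i) * Med y i) → y = xs) ∧
      ∀ x : ℕ → Fin n → ℝ,
        (∀ t i, x (t + 1) i = lam i * u i + (1 - lam i) * Med (x t) i) →
        (∀ t : ℕ, ‖x t - xs‖ ≤
            (1 - Finset.univ.inf' ⟨⟨0, hn⟩, Finset.mem_univ _⟩ lam) ^ t * ‖x 0 - xs‖) ∧
        Filter.Tendsto x Filter.atTop (nhds xs) := by
  have hne : (Finset.univ : Finset (Fin n)).Nonempty := ⟨⟨0, hn⟩, Finset.mem_univ _⟩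
  set lm : ℝ := Finset.univ.inf' hne lam with hlm
  have hlm_pos : 0 < lm := by
    rw [hlm, Finset.lt_inf'_iff]
    exact fun i _ => (hlam i).1
  have hlm_le : ∀ i, lm ≤ lam i := fun i => Finset.inf'_le _ (Finset.mem_univ i)
  have hlm_le1 : lm ≤ 1 := le_trans (hlm_le ⟨0, hn⟩) (hlam ⟨0, hn⟩).2
  set K : ℝ := 1 - lm with hK
  have hK0 : 0 ≤ K := by linarith
  have hK1 : K < 1 := by linarith
  set F : (Fin n → ℝ) → (Fin n → ℝ) :=
    fun x i => lam i * u i + (1 - lam i) * Med x i with hF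
  have hFlip : ∀ x y : Fin n → ℝ, dist (F x) (F y) ≤ K * dist x y := by
    intro x y
    refine dist_pi_le_iff (by positivity) |>.mpr fun i => ?_
    have hmed : |Med x i - Med y i| ≤ dist x y :=
      med_lip W hW Med hMed x y i (dist x y)
        (fun j => by rw [← Real.dist_eq]; exact dist_le_pi_dist x y j)
    have h1 : dist (F x i) (F y i) = (1 - lam i) * |Med x i - Med y i| := by
      rw [Real.dist_eq, hF]
      have : lam i * u i + (1 - lam i) * Med x i - (lam i * u i + (1 - lam i) * Med y i)
          = (1 - lam i) * (Med x i - Med y i) := by ring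
      rw [this, abs_mul, abs_of_nonneg (by linarith [(hlam i).2] : (0:ℝ) ≤ 1 - lam i)]
    rw [h1]
    have h2 : 1 - lam i ≤ K := by have := hlm_le i; rw [hK]; linarith
    exact mul_le_mul h2 hmed (abs_nonneg _) hK0
  set Kn : NNReal := ⟨K, hK0⟩ with hKn
  have hLip : LipschitzWith Kn F := LipschitzWith.of_dist_le_mul hFlip
  have hC : ContractingWith Kn F := ⟨by exact_mod_cast hK1, hLip⟩
  set xs : Fin n → ℝ := hC.fixedPoint F with hxs
  have hfix : F xs = xs := hC.fixedPoint_isFixedPt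
  refine ⟨xs, fun i => (congrFun hfix i).symm, ?_, ?_⟩
  · intro y hy
    have hyfix : F y = y := funext fun i => (hy i).symm
    have := hFlip y xs
    rw [hyfix, hfix] at this
    have hd : (0:ℝ) ≤ dist y xs := dist_nonneg
    have h0 : dist y xs = 0 := by nlinarith
    exact eq_of_dist_eq_zero h0
  · intro x hx
    have hstep : ∀ t, x (t + 1) = F (x t) := fun t => funext fun i => hx t i
    have hbound : ∀ t : ℕ, ‖x t - xs‖ ≤ K ^ t * ‖x 0 - xs‖ := by
      intro t
      induction t with
      | zero => simp
      | succ t ih =>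
        have : dist (x (t + 1)) xs ≤ K * dist (x t) xs := by
          have h := hFlip (x t) xs
          rw [hfix] at h
          rw [hstep t]
          exact h
        rw [← dist_eq_norm] at ih ⊢
        calc dist (x (t + 1)) xs ≤ K * dist (x t) xs := this
          _ ≤ K * (K ^ t * dist (x 0) xs) := by
              exact mul_le_mul_of_nonneg_left ih hK0
          _ = K ^ (t + 1) * dist (x 0) xs := by ring
    refine ⟨hbound, ?_⟩
    rw [tendsto_iff_dist_tendsto_zero]
    have hKt : Filter.Tendsto (fun t : ℕ => K ^ t * ‖x 0 - xs‖) Filter.atTop (nhds 0) := by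
      have := (tendsto_pow_atTop_nhds_zero_of_lt_one hK0 hK1).mul_const ‖x 0 - xs‖
      simpa using this
    refine squeeze_zero (fun t => dist_nonneg) (fun t => ?_) hKt
    rw [dist_eq_norm]; exact hbound t
end

section
/- (Theorem 1(ii).) Let W be an n×n row-stochastic nonnegative matrix, let Med(·;W) be a median selection for W, let λ_i ∈ (0,1] and u_i ∈ ℝ for all i, and consider the dynamics x(t+1) = Λu + (I_n − Λ)Med(x(t);W). Then asymptotic consensus is achieved for every initial state x(0) ∈ ℝ^n if and only if u_1 = u_2 = … = u_n; in that case the common limit equals the common prejudice value. -/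
open Finset Filter

private theorem key_conv (n : ℕ) (hn : 0 < n)
    (W : Matrix (Fin n) (Fin n) ℝ)
    (Med : (Fin n → ℝ) → Fin n → ℝ)
    (hMed : ∀ x i, ∃ j, x j = Med x i)
    (lam u : Fin n → ℝ) (hlam : ∀ i, lam i ∈ Set.Ioc (0 : ℝ) 1)
    (c : ℝ) (hc : ∀ i, u i = c)
    (x : ℕ → Fin n → ℝ)
    (hx : ∀ t i, x (t + 1) i = lam i * u i + (1 - lam i) * Med (x t) i)
    (i : Fin n) : Filter.Tendsto (fun t => x t i) Filter.atTop (nhds c) := by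
  have hne : (Finset.univ : Finset (Fin n)).Nonempty := ⟨⟨0, hn⟩, mem_univ _⟩
  set l0 := Finset.univ.inf' hne lam with hl0
  have hl0pos : 0 < l0 := by
    rw [hl0, Finset.lt_inf'_iff]; exact fun j _ => (hlam j).1
  set r := 1 - l0 with hr
  have hr0 : 0 ≤ r := by
    have h1 : l0 ≤ lam i := Finset.inf'_le lam (mem_univ i)
    have := (hlam i).2
    simp only [hr]; linarith
  have hr1 : r < 1 := by simp only [hr]; linarith
  set B := Finset.univ.sup' hne (fun j => |x 0 j - c|) with hB
  have hbound : ∀ t j, |x t j - c| ≤ r ^ t * B := by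
    intro t
    induction t with
    | zero =>
      intro j
      have := Finset.le_sup' (fun j => |x 0 j - c|) (mem_univ j)
      rw [← hB] at this
      simpa using this
    | succ t ih =>
      intro j
      have h1 : x (t + 1) j - c = (1 - lam j) * (Med (x t) j - c) := by
        rw [hx t j, hc j]; ring
      obtain ⟨k, hk⟩ := hMed (x t) j
      have hMk : |Med (x t) j - c| ≤ r ^ t * B := by rw [← hk]; exact ih k
      have h2 : 0 ≤ 1 - lam j := by linarith [(hlam j).2]
      have h3 : 1 - lam j ≤ r := by
        have := Finset.inf'_le lam (mem_univ j)
        simp only [hr]; linarith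
      calc |x (t + 1) j - c| = (1 - lam j) * |Med (x t) j - c| := by
            rw [h1, abs_mul, abs_of_nonneg h2]
        _ ≤ r * (r ^ t * B) :=
            mul_le_mul h3 hMk (abs_nonneg _) hr0
        _ = r ^ (t + 1) * B := by ring
  have htend : Tendsto (fun t => r ^ t * B) atTop (nhds 0) := by
    simpa using (tendsto_pow_atTop_nhds_zero_of_lt_one hr0 hr1).mul_const B
  have h0 : Tendsto (fun t => x t i - c) atTop (nhds 0) :=
    squeeze_zero_norm (fun t => hbound t i) htend
  have := h0.add_const c
  simpa using this

/-- Theorem 1(ii): asymptotic consensus for every initial state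
iff all prejudices are equal; in that case the common limit is the common prejudice. -/
theorem prejudice_dynamics_consensus_iff (n : ℕ) (hn : 0 < n)
    (W : Matrix (Fin n) (Fin n) ℝ) (hW : RowStochastic W)
    (Med : (Fin n → ℝ) → Fin n → ℝ) (hMed : IsMedianSelection W Med)
    (lam u : Fin n → ℝ) (hlam : ∀ i, lam i ∈ Set.Ioc (0 : ℝ) 1) :
    ((∀ x : ℕ → Fin n → ℝ,
        (∀ t i, x (t + 1) i = lam i * u i + (1 - lam i) * Med (x t) i) →
        ∃ c : ℝ, ∀ i, Filter.Tendsto (fun t => x t i) Filter.atTop (nhds c)) ↔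
      ∀ i j, u i = u j) ∧
    ∀ c : ℝ, (∀ i, u i = c) →
      ∀ x : ℕ → Fin n → ℝ,
        (∀ t i, x (t + 1) i = lam i * u i + (1 - lam i) * Med (x t) i) →
        ∀ i, Filter.Tendsto (fun t => x t i) Filter.atTop (nhds c) := by
  classical
  have hmed' : ∀ x i, ∃ j, x j = Med x i := fun x i => (hMed x i).1.1
  have key : ∀ c : ℝ, (∀ i, u i = c) →
      ∀ x : ℕ → Fin n → ℝ,
        (∀ t i, x (t + 1) i = lam i * u i + (1 - lam i) * Med (x t) i) →
        ∀ i, Filter.Tendsto (fun t => x t i) Filter.atTop (nhds c) :=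
    fun c hc x hx i => key_conv n hn W Med hmed' lam u hlam c hc x hx i
  refine ⟨⟨?_, ?_⟩, key⟩
  · intro h i j
    -- build a trajectory from the zero initial state
    set x : ℕ → Fin n → ℝ :=
      fun t => Nat.rec (fun _ => 0)
        (fun _ xt i => lam i * u i + (1 - lam i) * Med xt i) t with hxdef
    have hx : ∀ t i, x (t + 1) i = lam i * u i + (1 - lam i) * Med (x t) i :=
      fun t i => rfl
    obtain ⟨c, hc⟩ := h x hx
    have hall : ∀ k, u k = c := by
      intro k
      -- Med (x t) k tends to c
      have hmedt : Tendsto (fun t => Med (x t) k) atTop (nhds c) := by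
        rw [Metric.tendsto_atTop]
        intro ε hε
        have hev : ∀ᶠ t in atTop, ∀ m, dist (x t m) c < ε := by
          rw [Filter.eventually_all]
          intro m
          have := (hc m) (Metric.ball_mem_nhds c hε)
          simpa [Metric.mem_ball] using this
        obtain ⟨N, hN⟩ := Filter.eventually_atTop.mp hev
        refine ⟨N, fun t ht => ?_⟩
        obtain ⟨l, hl⟩ := hmed' (x t) k
        rw [← hl]
        exact hN t ht l
      have h1 : Tendsto (fun t => x (t + 1) k) atTop
          (nhds (lam k * u k + (1 - lam k) * c)) := by
        have := (hmedt.const_mul (1 - lam k)).const_add (lam k * u k)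
        simpa only [← hx] using this
      have h2 : Tendsto (fun t => x (t + 1) k) atTop (nhds c) :=
        (hc k).comp (tendsto_add_atTop_nat 1)
      have heq : lam k * u k + (1 - lam k) * c = c :=
        tendsto_nhds_unique h1 h2
      have hk0 : lam k ≠ 0 := ne_of_gt (hlam k).1
      have : lam k * (u k - c) = 0 := by linarith [heq]
      rcases mul_eq_zero.mp this with h | h
      · exact absurd h hk0
      · linarith
    rw [hall i, hall j]
  · intro h x hx
    exact ⟨u ⟨0, hn⟩, key (u ⟨0, hn⟩) (fun i => h i ⟨0, hn⟩) x hx⟩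
end

section
/- (Corollary 1: form of the limit point.) Let W be an n×n row-stochastic nonnegative matrix, Med(·;W) a median selection for W, λ_i ∈ (0,1] and u_i ∈ ℝ for all i, and let x* ∈ ℝ^n be the unique fixed point of F(x) = Λu + (I_n − Λ)Med(x;W) (equivalently, the common limit of all trajectories of the dynamics). Then there exists a matrix A ∈ ℝ^{n×n} such that in each row i of A exactly one entry equals 1 − λ_i and all other entries are 0 (i.e., there is a map k : {1,…,n} → {1,…,n} with a_{ij} = (1 − λ_i) if j = k(i) and a_{ij} = 0 otherwise), the matrix I_n − A is invertible, and x* = (I_n − A)^{-1} Λ u. -/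
open Finset Filter

open Matrix in
/-- Corollary 1: form of the limit point `x* = (I - A)⁻¹ Λ u`,
where each row `i` of `A` has exactly one nonzero entry, equal to `1 - λᵢ`. -/
theorem prejudice_dynamics_limit_form (n : ℕ) (hn : 0 < n)
    (W : Matrix (Fin n) (Fin n) ℝ) (hW : RowStochastic W)
    (Med : (Fin n → ℝ) → Fin n → ℝ) (hMed : IsMedianSelection W Med)
    (lam u : Fin n → ℝ) (hlam : ∀ i, lam i ∈ Set.Ioc (0 : ℝ) 1)
    (xs : Fin n → ℝ) (hxs : ∀ i, xs i = lam i * u i + (1 - lam i) * Med xs i) :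
    ∃ k : Fin n → Fin n,
      IsUnit (1 - Matrix.of (fun i j => if j = k i then 1 - lam i else 0)) ∧
      xs = (1 - Matrix.of (fun i j => if j = k i then 1 - lam i else (0 : ℝ)))⁻¹ *ᵥ
          (fun i => lam i * u i) := by
  classical
  -- choose k i with xs (k i) = Med xs i
  have hmed : ∀ i, ∃ j, xs j = Med xs i := fun i => (hMed xs i).1.1
  choose k hk using hmed
  set A : Matrix (Fin n) (Fin n) ℝ :=
    Matrix.of (fun i j => if j = k i then 1 - lam i else (0 : ℝ)) with hA
  refine ⟨k, ?_, ?_⟩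
  case _ =>
    rw [Matrix.isUnit_iff_isUnit_det, isUnit_iff_ne_zero]
    apply det_ne_zero_of_sum_row_lt_diag
    intro i
    by_cases hki : k i = i
    · have : ∀ j ∈ Finset.univ.erase i, ‖(1 - A) i j‖ = 0 := by
        intro j hj
        have hji : j ≠ i := (Finset.mem_erase.mp hj).1
        simp [hA, Matrix.sub_apply, Matrix.one_apply, hji, Ne.symm hji, hki]
      rw [Finset.sum_congr rfl this]
      have h1 : (1 - A) i i = lam i := by
        simp [hA, Matrix.sub_apply, Matrix.one_apply, hki]
      rw [h1]
      simp [Real.norm_eq_abs, abs_of_pos (hlam i).1, (hlam i).1]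
    · have hsum : ∑ j ∈ Finset.univ.erase i, ‖(1 - A) i j‖ = 1 - lam i := by
        rw [Finset.sum_eq_single (k i)]
        · have hkine : (i : Fin n) ≠ k i := fun h => hki h.symm
          have he : (1 - A) i (k i) = lam i - 1 := by
            simp [hA, Matrix.sub_apply, Matrix.one_apply, hkine]
          rw [he, Real.norm_eq_abs, abs_sub_comm]
          exact abs_of_nonneg (by linarith [(hlam i).2])
        · intro j hj hjk
          have hji : j ≠ i := (Finset.mem_erase.mp hj).1
          simp [hA, Matrix.sub_apply, Matrix.one_apply, hji, Ne.symm hji, hjk, Real.norm_eq_abs]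
        · intro h
          exact absurd (Finset.mem_erase.mpr ⟨hki, Finset.mem_univ _⟩) h
      have h1 : (1 - A) i i = 1 := by
        have : (i : Fin n) ≠ k i := fun h => hki h.symm
        simp [hA, Matrix.sub_apply, Matrix.one_apply, this]
      rw [hsum, h1]
      simp [Real.norm_eq_abs]
      linarith [(hlam i).1]
  case _ =>
    have hunit : IsUnit (1 - A).det := by
      rw [isUnit_iff_ne_zero]
      apply det_ne_zero_of_sum_row_lt_diag
      intro i
      by_cases hki : k i = i
      · have : ∀ j ∈ Finset.univ.erase i, ‖(1 - A) i j‖ = 0 := by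
          intro j hj
          have hji : j ≠ i := (Finset.mem_erase.mp hj).1
          simp [hA, Matrix.sub_apply, Matrix.one_apply, hji, Ne.symm hji, hki]
        rw [Finset.sum_congr rfl this]
        have h1 : (1 - A) i i = lam i := by
          simp [hA, Matrix.sub_apply, Matrix.one_apply, hki]
        rw [h1]
        simp [Real.norm_eq_abs, abs_of_pos (hlam i).1, (hlam i).1]
      · have hsum : ∑ j ∈ Finset.univ.erase i, ‖(1 - A) i j‖ = 1 - lam i := by
          rw [Finset.sum_eq_single (k i)]
          · have hkine : (i : Fin n) ≠ k i := fun h => hki h.symm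
            have he : (1 - A) i (k i) = lam i - 1 := by
              simp [hA, Matrix.sub_apply, Matrix.one_apply, hkine]
            rw [he, Real.norm_eq_abs, abs_sub_comm]
            exact abs_of_nonneg (by linarith [(hlam i).2])
          · intro j hj hjk
            have hji : j ≠ i := (Finset.mem_erase.mp hj).1
            simp [hA, Matrix.sub_apply, Matrix.one_apply, hji, Ne.symm hji, hjk, Real.norm_eq_abs]
          · intro h
            exact absurd (Finset.mem_erase.mpr ⟨hki, Finset.mem_univ _⟩) h
        have h1 : (1 - A) i i = 1 := by
          have : (i : Fin n) ≠ k i := fun h => hki h.symm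
          simp [hA, Matrix.sub_apply, Matrix.one_apply, this]
        rw [hsum, h1]
        simp [Real.norm_eq_abs]
        linarith [(hlam i).1]
    have hmv : (1 - A) *ᵥ xs = fun i => lam i * u i := by
      funext i
      have : ((1 - A) *ᵥ xs) i = xs i - (1 - lam i) * xs (k i) := by
        simp only [Matrix.mulVec, dotProduct, Matrix.sub_apply, sub_mul]
        rw [Finset.sum_sub_distrib]
        congr 1
        · simp [Matrix.one_apply, Finset.sum_ite_eq, Finset.mem_univ]
        · rw [Finset.sum_eq_single (k i)]
          · simp [hA]; ring
          · intro j _ hjk; simp [hA, hjk]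
          · simp
      rw [this, hk i]
      have := hxs i
      linarith
    rw [← hmv, Matrix.mulVec_mulVec, Matrix.nonsing_inv_mul _ hunit, Matrix.one_mulVec]
end

section
/- (Proposition 1, odd case.) Let n be odd, let W be the complete-graph matrix w_{ij} = 1/n for all i, j, let Med(·;W) be a median selection for W, let λ_i ∈ (0,1] for all i, and let u ∈ ℝ^n satisfy u_1 ≤ u_2 ≤ … ≤ u_n. Then for every initial state x(0) ∈ ℝ^n, the trajectory of x(t+1) = Λu + (I_n − Λ)Med(x(t);W) converges, and its limit x* satisfies x*_i = λ_i u_i + (1 − λ_i) u_{(n+1)/2} for every i ∈ {1,…,n}. -/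
open Finset Filter

/-- If a set of more than half the indices has `x i ≥ b`, any uniform-weight median is `≥ b`. -/
lemma wm_ge {n : ℕ} (hpos : 0 < n) (x : Fin n → ℝ) (m b : ℝ)
    (hm : IsWeightedMedian (fun _ => (1 : ℝ) / n) x m)
    (S : Finset (Fin n)) (hcard : n < 2 * S.card) (hS : ∀ i ∈ S, b ≤ x i) : b ≤ m := by
  by_contra h
  push_neg at h
  have hsub : S ⊆ univ.filter (fun i => m < x i) := fun i hi =>
    mem_filter.mpr ⟨mem_univ _, lt_of_lt_of_le h (hS i hi)⟩
  have hle := hm.2.2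
  rw [Finset.sum_const, nsmul_eq_mul, mul_one_div] at hle
  have hn : (0 : ℝ) < n := by exact_mod_cast hpos
  rw [div_le_iff₀ hn] at hle
  have h2 : (n : ℝ) < 2 * S.card := by exact_mod_cast hcard
  have h3 : (S.card : ℝ) ≤ (univ.filter (fun i => m < x i)).card := by
    exact_mod_cast Finset.card_le_card hsub
  linarith

/-- Symmetric: if more than half have `x i ≤ b`, any uniform-weight median is `≤ b`. -/
lemma wm_le {n : ℕ} (hpos : 0 < n) (x : Fin n → ℝ) (m b : ℝ)
    (hm : IsWeightedMedian (fun _ => (1 : ℝ) / n) x m)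
    (S : Finset (Fin n)) (hcard : n < 2 * S.card) (hS : ∀ i ∈ S, x i ≤ b) : m ≤ b := by
  by_contra h
  push_neg at h
  have hsub : S ⊆ univ.filter (fun i => x i < m) := fun i hi =>
    mem_filter.mpr ⟨mem_univ _, lt_of_le_of_lt (hS i hi) h⟩
  have hle := hm.2.1
  rw [Finset.sum_const, nsmul_eq_mul, mul_one_div] at hle
  have hn : (0 : ℝ) < n := by exact_mod_cast hpos
  rw [div_le_iff₀ hn] at hle
  have h2 : (n : ℝ) < 2 * S.card := by exact_mod_cast hcard
  have h3 : (S.card : ℝ) ≤ (univ.filter (fun i => x i < m)).card := by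
    exact_mod_cast Finset.card_le_card hsub
  linarith

/-- For odd `n` and uniform weights, more than half of the indices satisfy `x i ≤ m`
and more than half satisfy `m ≤ x i`. -/
lemma wm_half {n : ℕ} (hodd : Odd n) (hpos : 0 < n) (x : Fin n → ℝ) (m : ℝ)
    (hm : IsWeightedMedian (fun _ => (1 : ℝ) / n) x m) :
    n < 2 * (univ.filter (fun i => x i ≤ m)).card ∧
      n < 2 * (univ.filter (fun i => m ≤ x i)).card := by
  have hn : (0 : ℝ) < n := by exact_mod_cast hpos
  have key : ∀ (p : Fin n → Prop) (_ : DecidablePred p),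
      (∑ i ∈ univ.filter p, (1 : ℝ) / n) ≤ 1 / 2 → 2 * (univ.filter p).card ≤ n := by
    intro p _ hle
    rw [Finset.sum_const, nsmul_eq_mul, mul_one_div, div_le_iff₀ hn] at hle
    have : 2 * ((univ.filter p).card : ℝ) ≤ n := by linarith
    exact_mod_cast this
  have h1 := key _ _ hm.2.1
  have h2 := key _ _ hm.2.2
  have e1 : (univ.filter (fun i => m ≤ x i)).card + (univ.filter (fun i => x i < m)).card = n := by
    simpa [not_le] using
      Finset.card_filter_add_card_filter_not (s := univ) (p := fun i => m ≤ x i)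
  have e2 : (univ.filter (fun i => x i ≤ m)).card + (univ.filter (fun i => m < x i)).card = n := by
    simpa [not_le] using
      Finset.card_filter_add_card_filter_not (s := univ) (p := fun i => x i ≤ m)
  obtain ⟨j, hj⟩ := hodd
  omega

/-- For odd `n` the uniform-weight median is unique. -/
lemma wm_unique {n : ℕ} (hodd : Odd n) (hpos : 0 < n) (x : Fin n → ℝ) (m m' : ℝ)
    (hm : IsWeightedMedian (fun _ => (1 : ℝ) / n) x m)
    (hm' : IsWeightedMedian (fun _ => (1 : ℝ) / n) x m') : m = m' := by
  obtain ⟨hle, hge⟩ := wm_half hodd hpos x m hm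
  refine le_antisymm ?_ ?_
  · exact wm_ge hpos x m' m hm' _ hge (fun i hi => (mem_filter.mp hi).2)
  · exact wm_le hpos x m' m hm' _ hle (fun i hi => (mem_filter.mp hi).2)

/-- The contraction step. -/
lemma wm_contraction {n : ℕ} (hodd : Odd n) (hpos : 0 < n) (lam u : Fin n → ℝ)
    (hlam : ∀ i, lam i ∈ Set.Ioc (0 : ℝ) 1) (hu : Monotone u) (c : ℝ)
    (hc : ∀ i, 1 - lam i ≤ c) (hc0 : 0 ≤ c) (k : Fin n) (hk : (k : ℕ) = n / 2)
    (m m' : ℝ)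
    (hm' : IsWeightedMedian (fun _ => (1 : ℝ) / n)
      (fun i => lam i * u i + (1 - lam i) * m) m') :
    |m' - u k| ≤ c * |m - u k| := by
  obtain ⟨j, hj⟩ := hodd
  have hIci : n < 2 * (univ.filter (fun i : Fin n => k ≤ i)).card := by
    have : univ.filter (fun i : Fin n => k ≤ i) = Finset.Ici k := by
      ext i; simp
    rw [this, Fin.card_Ici, hk]
    omega
  have hIic : n < 2 * (univ.filter (fun i : Fin n => i ≤ k)).card := by
    have : univ.filter (fun i : Fin n => i ≤ k) = Finset.Iic k := by
      ext i; simp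
    rw [this, Fin.card_Iic, hk]
    omega
  rcases le_total (u k) m with hcase | hcase
  · have h1 : u k ≤ m' := by
      refine wm_ge hpos _ m' (u k) hm' _ hIci ?_
      intro i hi
      have hki : k ≤ i := (mem_filter.mp hi).2
      have h1 := hu hki
      have h2 := (hlam i).1.le
      have h3 := (hlam i).2
      nlinarith
    have h2 : m' ≤ u k + c * (m - u k) := by
      refine wm_le hpos _ m' _ hm' _ hIic ?_
      intro i hi
      have hik : i ≤ k := (mem_filter.mp hi).2
      have h1 := hu hik
      have h2 := (hlam i).1.le
      have h3 := (hlam i).2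
      have h4 := hc i
      nlinarith
    rw [abs_of_nonneg (by linarith), abs_of_nonneg (by linarith)]
    linarith
  · have h1 : m' ≤ u k := by
      refine wm_le hpos _ m' (u k) hm' _ hIic ?_
      intro i hi
      have hik : i ≤ k := (mem_filter.mp hi).2
      have h1 := hu hik
      have h2 := (hlam i).1.le
      have h3 := (hlam i).2
      nlinarith
    have h2 : u k + c * (m - u k) ≤ m' := by
      refine wm_ge hpos _ m' _ hm' _ hIci ?_
      intro i hi
      have hki : k ≤ i := (mem_filter.mp hi).2
      have h1 := hu hki
      have h2 := (hlam i).1.le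
      have h3 := (hlam i).2
      have h4 := hc i
      nlinarith
    rw [abs_of_nonpos (by linarith), abs_of_nonpos (by linarith)]
    linarith


/-- Proposition 1, odd case: on the complete graph with odd `n`,
every trajectory converges to the limit `x*ᵢ = λᵢ uᵢ + (1 - λᵢ) u_{(n+1)/2}`. -/
theorem complete_graph_limit_odd (n : ℕ) (hodd : Odd n) (hpos : 0 < n)
    (Med : (Fin n → ℝ) → Fin n → ℝ)
    (hMed : IsMedianSelection (Matrix.of fun _ _ => (1 : ℝ) / n) Med)
    (lam u : Fin n → ℝ) (hlam : ∀ i, lam i ∈ Set.Ioc (0 : ℝ) 1) (hu : Monotone u)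
    (x : ℕ → Fin n → ℝ)
    (hdyn : ∀ t i, x (t + 1) i = lam i * u i + (1 - lam i) * Med (x t) i) :
    Filter.Tendsto x Filter.atTop
      (nhds fun i => lam i * u i +
        (1 - lam i) * u ⟨n / 2, Nat.div_lt_self hpos one_lt_two⟩) := by
  set k : Fin n := ⟨n / 2, Nat.div_lt_self hpos one_lt_two⟩ with hkdef
  have hne : (univ : Finset (Fin n)).Nonempty := ⟨⟨0, hpos⟩, mem_univ _⟩
  -- contraction constant
  set c : ℝ := 1 - univ.inf' hne lam with hcdef
  have hc : ∀ i, 1 - lam i ≤ c := fun i => by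
    have := Finset.inf'_le lam (mem_univ i); simp only [hcdef]; linarith
  have hcpos : c < 1 := by
    have : 0 < univ.inf' hne lam := by
      rw [Finset.lt_inf'_iff]; exact fun i _ => (hlam i).1
    simp only [hcdef]; linarith
  have hc0 : 0 ≤ c := by
    obtain ⟨i, _, hi⟩ := Finset.exists_mem_eq_inf' hne lam
    have := (hlam i).2
    simp only [hcdef, hi]; linarith
  -- each row of the complete-graph matrix is the uniform weight vector
  have hrow : ∀ (y : Fin n → ℝ) (i : Fin n),
      IsWeightedMedian (fun _ => (1 : ℝ) / n) y (Med y i) := fun y i => (hMed y i).1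
  -- all coordinates of Med agree
  set M : ℕ → ℝ := fun t => Med (x t) ⟨0, hpos⟩ with hMdef
  have hMeq : ∀ t i, Med (x t) i = M t := fun t i =>
    wm_unique hodd hpos (x t) _ _ (hrow (x t) i) (hrow (x t) ⟨0, hpos⟩)
  -- contraction estimate
  have hstep : ∀ t, |M (t + 1) - u k| ≤ c * |M t - u k| := by
    intro t
    have hx : x (t + 1) = fun i => lam i * u i + (1 - lam i) * M t := by
      funext i; rw [hdyn t i, hMeq t i]
    refine wm_contraction hodd hpos lam u hlam hu c hc hc0 k rfl (M t) (M (t + 1)) ?_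
    have hM1 : M (t + 1) = Med (fun i => lam i * u i + (1 - lam i) * M t) ⟨0, hpos⟩ := by
      simp only [hMdef]; rw [hx]
    rw [hM1]
    exact hrow _ _
  have hbound : ∀ t, |M t - u k| ≤ c ^ t * |M 0 - u k| := by
    intro t
    induction t with
    | zero => simp
    | succ t ih =>
      calc |M (t + 1) - u k| ≤ c * |M t - u k| := hstep t
        _ ≤ c * (c ^ t * |M 0 - u k|) := by
            exact mul_le_mul_of_nonneg_left ih hc0
        _ = c ^ (t + 1) * |M 0 - u k| := by ring
  -- M tends to u k
  have hM : Tendsto M atTop (nhds (u k)) := by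
    rw [← tendsto_sub_nhds_zero_iff, tendsto_zero_iff_abs_tendsto_zero]
    have h0 : Tendsto (fun t => c ^ t * |M 0 - u k|) atTop (nhds 0) := by
      simpa using (tendsto_pow_atTop_nhds_zero_of_lt_one hc0 hcpos).mul_const (|M 0 - u k|)
    exact squeeze_zero (fun t => abs_nonneg _) hbound h0
  -- conclude coordinatewise
  rw [tendsto_pi_nhds]
  intro i
  rw [← tendsto_add_atTop_iff_nat 1]
  have hx : (fun t => x (t + 1) i) = fun t => lam i * u i + (1 - lam i) * M t := by
    funext t; rw [hdyn t i, hMeq t i]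
  rw [hx]
  exact ((hM.const_mul (1 - lam i)).const_add (lam i * u i))
end

section
/- (Lemma 5 of the paper.) Let W be an n×n row-stochastic nonnegative matrix, let i ∈ V = {1,…,n}, and let M ⊆ V be a nonempty set such that ∑_{j ∈ M} w_{ij} > 1/2 if i ∉ M, and ∑_{j ∈ M} w_{ij} ≥ 1/2 if i ∈ M. Then for every x ∈ ℝ^n and every value m* that is a weighted median of x associated with (w_{i1},…,w_{in}) closest to x_i (i.e., |m* − x_i| ≤ |m − x_i| for every weighted median m of x associated with (w_{i1},…,w_{in})), one has min_{j ∈ M} x_j ≤ m* ≤ max_{j ∈ M} x_j. -/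
open Finset Filter

/-- Lemma 5: if row `i` of `W` puts weight `> 1/2` (resp. `≥ 1/2` if
`i ∈ M`) on a set `M`, then every closest weighted median for row `i` lies between
the smallest and largest entries of `x` on `M`. -/
theorem median_between_cohesive_bounds (n : ℕ) (W : Matrix (Fin n) (Fin n) ℝ)
    (hW : RowStochastic W) (i : Fin n) (M : Finset (Fin n)) (hM : M.Nonempty)
    (hnotmem : i ∉ M → 1 / 2 < ∑ j ∈ M, W i j)
    (hmem : i ∈ M → 1 / 2 ≤ ∑ j ∈ M, W i j)
    (x : Fin n → ℝ) (m : ℝ) (hm : IsWeightedMedian (W i) x m)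
    (hclosest : ∀ m' : ℝ, IsWeightedMedian (W i) x m' → |m - x i| ≤ |m' - x i|) :
    M.inf' hM x ≤ m ∧ m ≤ M.sup' hM x := by
  obtain ⟨hnn, hrow⟩ := hW
  obtain ⟨_, hlt, hgt⟩ := hm
  have hsplit : ∀ m' : ℝ,
      ∑ j ∈ univ.filter (fun j => x j < m'), W i j
        + ∑ j ∈ univ.filter (fun j => ¬ x j < m'), W i j = 1 := by
    intro m'
    rw [Finset.sum_filter_add_sum_filter_not]
    exact hrow i
  have hsplit' : ∀ m' : ℝ,
      ∑ j ∈ univ.filter (fun j => m' < x j), W i j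
        + ∑ j ∈ univ.filter (fun j => ¬ m' < x j), W i j = 1 := by
    intro m'
    rw [Finset.sum_filter_add_sum_filter_not]
    exact hrow i
  constructor
  · by_contra h
    push_neg at h
    -- h : m < M.inf' hM x
    have hMsub : M ⊆ univ.filter (fun j => m < x j) := by
      intro j hj
      simp only [Finset.mem_filter, Finset.mem_univ, true_and]
      exact lt_of_lt_of_le h (Finset.inf'_le _ hj)
    have hMsum : ∑ j ∈ M, W i j ≤ ∑ j ∈ univ.filter (fun j => m < x j), W i j :=
      Finset.sum_le_sum_of_subset_of_nonneg hMsub (fun j _ _ => hnn i j)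
    by_cases hiM : i ∈ M
    · have h12 := hmem hiM
      obtain ⟨k, hkM, hkx⟩ := Finset.exists_mem_eq_inf' hM x
      have hmed : IsWeightedMedian (W i) x (M.inf' hM x) := by
        refine ⟨⟨k, hkx.symm⟩, ?_, ?_⟩
        · have hsub : M ⊆ univ.filter (fun j => ¬ x j < M.inf' hM x) := by
            intro j hj
            simp only [Finset.mem_filter, Finset.mem_univ, true_and, not_lt]
            exact Finset.inf'_le _ hj
          have h1 : ∑ j ∈ M, W i j
              ≤ ∑ j ∈ univ.filter (fun j => ¬ x j < M.inf' hM x), W i j :=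
            Finset.sum_le_sum_of_subset_of_nonneg hsub (fun j _ _ => hnn i j)
          linarith [hsplit (M.inf' hM x)]
        · have hsub : univ.filter (fun j => M.inf' hM x < x j)
              ⊆ univ.filter (fun j => m < x j) := by
            intro j hj
            simp only [Finset.mem_filter, Finset.mem_univ, true_and] at hj ⊢
            linarith
          calc ∑ j ∈ univ.filter (fun j => M.inf' hM x < x j), W i j
              ≤ ∑ j ∈ univ.filter (fun j => m < x j), W i j :=
                Finset.sum_le_sum_of_subset_of_nonneg hsub (fun j _ _ => hnn i j)
            _ ≤ 1 / 2 := hgt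
      have hxi : M.inf' hM x ≤ x i := Finset.inf'_le _ hiM
      have hc := hclosest _ hmed
      rw [abs_of_nonpos (by linarith), abs_of_nonpos (by linarith)] at hc
      linarith
    · have := hnotmem hiM
      linarith
  · by_contra h
    push_neg at h
    -- h : M.sup' hM x < m
    have hMsub : M ⊆ univ.filter (fun j => x j < m) := by
      intro j hj
      simp only [Finset.mem_filter, Finset.mem_univ, true_and]
      exact lt_of_le_of_lt (Finset.le_sup' _ hj) h
    have hMsum : ∑ j ∈ M, W i j ≤ ∑ j ∈ univ.filter (fun j => x j < m), W i j :=
      Finset.sum_le_sum_of_subset_of_nonneg hMsub (fun j _ _ => hnn i j)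
    by_cases hiM : i ∈ M
    · have h12 := hmem hiM
      obtain ⟨k, hkM, hkx⟩ := Finset.exists_mem_eq_sup' hM x
      have hmed : IsWeightedMedian (W i) x (M.sup' hM x) := by
        refine ⟨⟨k, hkx.symm⟩, ?_, ?_⟩
        · have hsub : univ.filter (fun j => x j < M.sup' hM x)
              ⊆ univ.filter (fun j => x j < m) := by
            intro j hj
            simp only [Finset.mem_filter, Finset.mem_univ, true_and] at hj ⊢
            linarith
          calc ∑ j ∈ univ.filter (fun j => x j < M.sup' hM x), W i j
              ≤ ∑ j ∈ univ.filter (fun j => x j < m), W i j :=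
                Finset.sum_le_sum_of_subset_of_nonneg hsub (fun j _ _ => hnn i j)
            _ ≤ 1 / 2 := hlt
        · have hsub : M ⊆ univ.filter (fun j => ¬ M.sup' hM x < x j) := by
            intro j hj
            simp only [Finset.mem_filter, Finset.mem_univ, true_and, not_lt]
            exact Finset.le_sup' _ hj
          have h1 : ∑ j ∈ M, W i j
              ≤ ∑ j ∈ univ.filter (fun j => ¬ M.sup' hM x < x j), W i j :=
            Finset.sum_le_sum_of_subset_of_nonneg hsub (fun j _ _ => hnn i j)
          linarith [hsplit' (M.sup' hM x)]
      have hxi : x i ≤ M.sup' hM x := Finset.le_sup' _ hiM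
      have hc := hclosest _ hmed
      rw [abs_of_nonneg (by linarith), abs_of_nonneg (by linarith)] at hc
      linarith
    · have := hnotmem hiM
      linarith
end

section
/- (Lemma 6 of the paper: cohesive sets are invariant.) Consider the partial-prejudice weighted-median dynamics on V = V1 ∪ V2 with common prejudice u ∈ ℝ. If there exists a cohesive set M ⊆ V2 consisting of unprejudiced agents only, then for every trajectory, every i ∈ M and every t ∈ ℕ: min_{j ∈ M} x_j(0) ≤ x_i(t) ≤ max_{j ∈ M} x_j(0). -/
open Finset Filter

lemma med_bounds {n : ℕ} (W : Matrix (Fin n) (Fin n) ℝ)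
    (hW : RowStochastic W) (Med : (Fin n → ℝ) → Fin n → ℝ)
    (hMed : IsMedianSelection W Med)
    (M : Finset (Fin n)) (hMne : M.Nonempty)
    (hcoh : ∀ i ∈ M, 1 / 2 ≤ ∑ j ∈ M, W i j) (y : Fin n → ℝ)
    (i : Fin n) (hi : i ∈ M) :
    M.inf' hMne y ≤ Med y i ∧ Med y i ≤ M.sup' hMne y := by
  obtain ⟨hm, hmin⟩ := hMed y i
  constructor
  · by_contra h
    push_neg at h
    set m := Med y i
    set b := M.inf' hMne y with hb
    have hb_med : IsWeightedMedian (W i) y b := by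
      refine ⟨?_, ?_, ?_⟩
      · obtain ⟨j, _, hjb⟩ := Finset.exists_mem_eq_inf' hMne y
        exact ⟨j, hjb.symm⟩
      · have hdisj : Disjoint (univ.filter (fun j => y j < b)) M := by
          rw [Finset.disjoint_left]
          intro j hj hjM
          simp only [mem_filter] at hj
          exact absurd (Finset.inf'_le y hjM) (not_le.2 hj.2)
        have hle : ∑ j ∈ univ.filter (fun j => y j < b), W i j + ∑ j ∈ M, W i j ≤ 1 := by
          rw [← Finset.sum_union hdisj, ← hW.2 i]
          exact Finset.sum_le_sum_of_subset_of_nonneg (Finset.subset_univ _)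
            (fun j _ _ => hW.1 i j)
        linarith [hcoh i hi]
      · refine le_trans (Finset.sum_le_sum_of_subset_of_nonneg ?_
          (fun j _ _ => hW.1 i j)) hm.2.2
        intro j hj
        simp only [mem_filter, mem_univ, true_and] at *
        exact lt_trans h hj
    have hyi : b ≤ y i := Finset.inf'_le y hi
    have h1 : |m - y i| ≤ y i - b := by
      have h0 := hmin b hb_med
      rw [show |b - y i| = y i - b by rw [abs_of_nonpos (by linarith)]; ring] at h0
      exact h0
    have h2 := neg_abs_le (m - y i)
    linarith
  · by_contra h
    push_neg at h
    set m := Med y i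
    set b := M.sup' hMne y with hb
    have hb_med : IsWeightedMedian (W i) y b := by
      refine ⟨?_, ?_, ?_⟩
      · obtain ⟨j, _, hjb⟩ := Finset.exists_mem_eq_sup' hMne y
        exact ⟨j, hjb.symm⟩
      · refine le_trans (Finset.sum_le_sum_of_subset_of_nonneg ?_
          (fun j _ _ => hW.1 i j)) hm.2.1
        intro j hj
        simp only [mem_filter, mem_univ, true_and] at *
        exact lt_trans hj h
      · have hdisj : Disjoint (univ.filter (fun j => b < y j)) M := by
          rw [Finset.disjoint_left]
          intro j hj hjM
          simp only [mem_filter] at hj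
          exact absurd (Finset.le_sup' y hjM) (not_le.2 hj.2)
        have hle : ∑ j ∈ univ.filter (fun j => b < y j), W i j + ∑ j ∈ M, W i j ≤ 1 := by
          rw [← Finset.sum_union hdisj, ← hW.2 i]
          exact Finset.sum_le_sum_of_subset_of_nonneg (Finset.subset_univ _)
            (fun j _ _ => hW.1 i j)
        linarith [hcoh i hi]
    have hyi : y i ≤ b := Finset.le_sup' y hi
    have h1 : |m - y i| ≤ b - y i := by
      have h0 := hmin b hb_med
      rw [show |b - y i| = b - y i from abs_of_nonneg (by linarith)] at h0
      exact h0
    have h2 := le_abs_self (m - y i)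
    linarith

/-- Lemma 6: a cohesive set of unprejudiced agents is invariant:
opinions in it stay between its initial extremes. -/
theorem cohesive_set_invariant (n : ℕ) (W : Matrix (Fin n) (Fin n) ℝ)
    (hW : RowStochastic W) (Med : (Fin n → ℝ) → Fin n → ℝ)
    (hMed : IsMedianSelection W Med)
    (V1 V2 : Finset (Fin n)) (hdisj : Disjoint V1 V2)
    (hunion : V1 ∪ V2 = Finset.univ) (hV1 : V1.Nonempty) (hV2 : V2.Nonempty)
    (lam : Fin n → ℝ) (hlam : ∀ i ∈ V1, lam i ∈ Set.Ioc (0 : ℝ) 1) (u : ℝ)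
    (x : ℕ → Fin n → ℝ)
    (hdyn1 : ∀ t : ℕ, ∀ i ∈ V1, x (t + 1) i = lam i * u + (1 - lam i) * Med (x t) i)
    (hdyn2 : ∀ t : ℕ, ∀ i ∈ V2, x (t + 1) i = Med (x t) i)
    (M : Finset (Fin n)) (hMne : M.Nonempty) (hMsub : M ⊆ V2)
    (hcoh : ∀ i ∈ M, 1 / 2 ≤ ∑ j ∈ M, W i j) :
    ∀ i ∈ M, ∀ t : ℕ, M.inf' hMne (x 0) ≤ x t i ∧ x t i ≤ M.sup' hMne (x 0) := by
  intro i hi t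
  induction t generalizing i with
  | zero => exact ⟨Finset.inf'_le _ hi, Finset.le_sup' _ hi⟩
  | succ t ih =>
    have hx : x (t + 1) i = Med (x t) i := hdyn2 t i (hMsub hi)
    obtain ⟨h1, h2⟩ := med_bounds W hW Med hMed M hMne hcoh (x t) i hi
    have hinf : M.inf' hMne (x 0) ≤ M.inf' hMne (x t) :=
      Finset.le_inf' hMne _ (fun j hj => (ih j hj).1)
    have hsup : M.sup' hMne (x t) ≤ M.sup' hMne (x 0) :=
      Finset.sup'_le hMne _ (fun j hj => (ih j hj).2)
    rw [hx]
    exact ⟨le_trans hinf h1, le_trans h2 hsup⟩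
end

section
/- Let W be an n×n row-stochastic nonnegative matrix with index set V = {1,…,n} partitioned as V = V1 ∪ V2 with V2 nonempty and |V2| = n2. Suppose that no nonempty subset of V2 is a cohesive set of G(W). Then the elements of V2 can be enumerated as k_1, k_2, …, k_{n2} (a bijection onto V2) such that for every i ∈ {1,…,n2}: ∑_{l=1}^{i−1} w_{k_i k_l} + ∑_{j ∈ V1} w_{k_i j} > 1/2. -/
/-!
Peel `V2` from the front. As `V2` is not cohesive, some `k₁ ∈ V2` puts weight `< 1/2` on `V2`;
remove it and recurse, since subsets of `V2 \ {k₁}` are still not cohesive. Each `k_a` thus puts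
weight `< 1/2` on its tail `{k_a, …, k_{n₂}}`, so by row-stochasticity more than `1/2` on the rest,
which is `V1` together with `k₁, …, k_{a-1}`.
-/

open Finset Filter

theorem Finset.sum_comp_eq_of_injective {ι M : Type*} [AddCommMonoid M] [DecidableEq ι]
    {S : Finset ι} {m : ℕ} {k : Fin m → ι} (hk : Function.Injective k) (hkS : ∀ a, k a ∈ S)
    (hm : S.card ≤ m) (f : ι → M) : ∑ a, f (k a) = ∑ j ∈ S, f j := by
  have himage : univ.image k = S :=
    eq_of_subset_of_card_le (by simpa [subset_iff] using hkS)
      (by simpa [card_image_of_injective _ hk] using hm)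
  rw [← himage, sum_image hk.injOn]

theorem exists_enumeration_sum_tail_lt {ι : Type*} [DecidableEq ι] (W : ι → ι → ℝ) (c : ℝ)
    (S : Finset ι) (hS : ∀ M ⊆ S, M.Nonempty → ∃ i ∈ M, ∑ j ∈ M, W i j < c) :
    ∃ k : Fin S.card → ι, Function.Injective k ∧ (∀ a, k a ∈ S) ∧
      ∀ a, ∑ l with a ≤ l, W (k a) (k l) < c := by
  induction hm : S.card generalizing S with
  | zero => exact ⟨Fin.elim0, fun a => a.elim0, fun a => a.elim0, fun a => a.elim0⟩
  | succ m ih =>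
    obtain ⟨i, hiS, hi⟩ := hS S Subset.rfl (card_pos.mp (by omega))
    have hcard : (S.erase i).card = m := by rw [card_erase_of_mem hiS, hm]; rfl
    obtain ⟨k, hk, hkS, hksum⟩ := ih (S.erase i)
      (fun M hM => hS M (hM.trans (erase_subset i S))) hcard
    have hkS' : ∀ a, k a ∈ S := fun a => mem_of_mem_erase (hkS a)
    have hik : i ∉ Set.range k := by
      rintro ⟨a, rfl⟩
      exact notMem_erase _ _ (hkS a)
    refine ⟨Fin.cons i k, Fin.cons_injective_iff.mpr ⟨hik, hk⟩, Fin.cases hiS hkS', ?_⟩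
    refine Fin.cases ?_ fun a => ?_
    · rw [← add_sum_erase S _ hiS] at hi
      simpa [Fin.sum_univ_succ, sum_comp_eq_of_injective hk hkS hcard.le] using hi
    · simpa [sum_filter, Fin.sum_univ_succ] using hksum a

theorem no_cohesive_enumeration_general (n : ℕ) (W : Matrix (Fin n) (Fin n) ℝ)
    (hW : RowStochastic W) (V1 V2 : Finset (Fin n)) (hdisj : Disjoint V1 V2)
    (hunion : V1 ∪ V2 = Finset.univ)
    (hnocoh : ∀ M : Finset (Fin n), M ⊆ V2 → M.Nonempty →
      ¬ ∀ i ∈ M, 1 / 2 ≤ ∑ j ∈ M, W i j) :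
    ∃ k : Fin V2.card → Fin n, Function.Injective k ∧ (∀ a, k a ∈ V2) ∧
      ∀ a : Fin V2.card,
        1 / 2 < (∑ l ∈ Finset.univ.filter (fun l : Fin V2.card => l < a), W (k a) (k l)) +
          ∑ j ∈ V1, W (k a) j := by
  obtain ⟨k, hk, hkV2, htail⟩ := exists_enumeration_sum_tail_lt W (1 / 2) V2
    fun M hM hne => by simpa using hnocoh M hM hne
  refine ⟨k, hk, hkV2, fun a => ?_⟩
  have hrow : ∑ j ∈ V1, W (k a) j + ∑ l, W (k a) (k l) = 1 := by
    rw [sum_comp_eq_of_injective hk hkV2 le_rfl, ← sum_union hdisj, hunion, hW.2]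
  have hsplit := sum_filter_add_sum_filter_not univ (· < a) fun l => W (k a) (k l)
  simp only [not_lt] at hsplit
  linarith [htail a]

/-- if no nonempty subset of `V2` is cohesive, the agents of `V2` can
be enumerated as `k₁, …, k_{n₂}` such that each `k_i` puts weight more than `1/2`
on `V1 ∪ {k₁, …, k_{i-1}}`. -/
theorem no_cohesive_enumeration (n : ℕ) (W : Matrix (Fin n) (Fin n) ℝ)
    (hW : RowStochastic W) (V1 V2 : Finset (Fin n)) (hdisj : Disjoint V1 V2)
    (hunion : V1 ∪ V2 = Finset.univ) (hV2 : V2.Nonempty)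
    (hnocoh : ∀ M : Finset (Fin n), M ⊆ V2 → M.Nonempty →
      ¬ ∀ i ∈ M, 1 / 2 ≤ ∑ j ∈ M, W i j) :
    ∃ k : Fin V2.card → Fin n, Function.Injective k ∧ (∀ a, k a ∈ V2) ∧
      ∀ a : Fin V2.card,
        1 / 2 < (∑ l ∈ Finset.univ.filter (fun l : Fin V2.card => l < a), W (k a) (k l)) +
          ∑ j ∈ V1, W (k a) j :=
  no_cohesive_enumeration_general n W hW V1 V2 hdisj hunion hnocoh
end

section
/- (Lemma 7 of the paper.) Consider the partial-prejudice weighted-median dynamics on V = V1 ∪ V2 with common prejudice u ∈ ℝ and n2 = |V2|. If G(W) does not contain a cohesive set consisting of unprejudiced agents only (no nonempty subset of V2 is cohesive), then for every trajectory, every i ∈ V2 and every t ≥ n2: min_{j ∈ V1, t−n2 ≤ s ≤ t−1} x_j(s) ≤ x_i(t) ≤ max_{j ∈ V1, t−n2 ≤ s ≤ t−1} x_j(s). -/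
open Finset Filter

lemma neg_median {n : ℕ} (ϑ : Fin n → ℝ) (x : Fin n → ℝ) (m : ℝ)
    (h : IsWeightedMedian ϑ x m) : IsWeightedMedian ϑ (fun i => -x i) (-m) := by
  obtain ⟨⟨i, hi⟩, h1, h2⟩ := h
  refine ⟨⟨i, by simp [hi]⟩, ?_, ?_⟩
  · have he : (Finset.univ.filter (fun i => -x i < -m))
        = (Finset.univ.filter (fun i => m < x i)) := by
      apply Finset.filter_congr; intro j _; simp
    rw [he]; exact h2
  · have he : (Finset.univ.filter (fun i => -m < -x i))
        = (Finset.univ.filter (fun i => x i < m)) := by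
      apply Finset.filter_congr; intro j _; simp
    rw [he]; exact h1

lemma aux_upper {n : ℕ} (W : Matrix (Fin n) (Fin n) ℝ) (hW : RowStochastic W)
    (V1 V2 : Finset (Fin n)) (hunion : V1 ∪ V2 = Finset.univ)
    (x : ℕ → Fin n → ℝ)
    (hmed : ∀ t : ℕ, ∀ i ∈ V2, IsWeightedMedian (W i) (x t) (x (t + 1) i))
    (hnocoh : ∀ M : Finset (Fin n), M ⊆ V2 → M.Nonempty →
      ¬ ∀ i ∈ M, 1 / 2 ≤ ∑ j ∈ M, W i j)
    (i : Fin n) (hi : i ∈ V2) (t : ℕ) (ht : V2.card ≤ t) (hn2pos : 0 < V2.card)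
    (hne : (V1 ×ˢ Finset.Icc (t - V2.card) (t - 1)).Nonempty) :
    x t i ≤ (V1 ×ˢ Finset.Icc (t - V2.card) (t - 1)).sup' hne (fun p => x p.2 p.1) := by
  classical
  set n2 := V2.card with hn2def
  set T := t - n2 with hT
  set m := (V1 ×ˢ Finset.Icc T (t - 1)).sup' hne (fun p => x p.2 p.1) with hm
  have hpre : ∀ j ∈ V1, ∀ s, T ≤ s → s ≤ t - 1 → x s j ≤ m := by
    intro j hj s h1 h2
    have hmem : (j, s) ∈ V1 ×ˢ Finset.Icc T (t - 1) :=
      Finset.mem_product.mpr ⟨hj, Finset.mem_Icc.mpr ⟨h1, h2⟩⟩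
    exact Finset.le_sup' (fun p : Fin n × ℕ => x p.2 p.1) hmem
  set S : ℕ → Finset (Fin n) := fun s => V2.filter (fun j => m < x s j) with hS
  set R : ℕ → Finset (Fin n) := fun s => (Finset.Icc s t).biUnion S with hR
  have hSV2 : ∀ s, S s ⊆ V2 := fun s => Finset.filter_subset _ _
  have hRV2 : ∀ s, R s ⊆ V2 := by
    intro s
    exact Finset.biUnion_subset.mpr fun σ _ => hSV2 σ
  have key : ∀ s, T ≤ s → s + 1 ≤ t → ∀ i ∈ S (s + 1), 1/2 ≤ ∑ j ∈ S s, W i j := by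
    intro s hs hst i hiS
    obtain ⟨hiV2, hxi⟩ := Finset.mem_filter.mp hiS
    obtain ⟨-, h1, h2⟩ := hmed s i hiV2
    have hsum := hW.2 i
    have hsplit : (∑ j ∈ Finset.univ.filter (fun j => x s j < x (s+1) i), W i j)
        + (∑ j ∈ Finset.univ.filter (fun j => ¬ x s j < x (s+1) i), W i j) = 1 := by
      rw [Finset.sum_filter_add_sum_filter_not]; exact hsum
    have hge : 1/2 ≤ ∑ j ∈ Finset.univ.filter (fun j => ¬ x s j < x (s+1) i), W i j := by
      linarith
    refine le_trans hge (Finset.sum_le_sum_of_subset_of_nonneg ?_ fun j _ _ => hW.1 i j)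
    intro j hj
    rw [Finset.mem_filter] at hj
    have hjx : x (s+1) i ≤ x s j := not_lt.mp hj.2
    have hjm : m < x s j := lt_of_lt_of_le hxi hjx
    have hjV2 : j ∈ V2 := by
      have hmem : j ∈ V1 ∪ V2 := hunion.symm ▸ Finset.mem_univ j
      rcases Finset.mem_union.mp hmem with hjV1 | hjV2
      · exact absurd (hpre j hjV1 s hs (by omega)) (not_le.mpr hjm)
      · exact hjV2
    exact Finset.mem_filter.mpr ⟨hjV2, hjm⟩
  have keyR : ∀ s, T ≤ s → s + 1 ≤ t → ∀ i ∈ R (s + 1), 1/2 ≤ ∑ j ∈ R s, W i j := by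
    intro s hs hst i hiR
    obtain ⟨σ, hσ, hiS⟩ := Finset.mem_biUnion.mp hiR
    rw [Finset.mem_Icc] at hσ
    have hσ1 : σ - 1 + 1 = σ := by omega
    have h := key (σ - 1) (by omega) (by omega) i (by rw [hσ1]; exact hiS)
    refine le_trans h (Finset.sum_le_sum_of_subset_of_nonneg ?_ fun j _ _ => hW.1 i j)
    intro j hj
    exact Finset.mem_biUnion.mpr ⟨σ - 1, Finset.mem_Icc.mpr ⟨by omega, by omega⟩, hj⟩
  have hRmono : ∀ s, R (s+1) ⊆ R s := by
    intro s j hj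
    obtain ⟨σ, hσ, hjS⟩ := Finset.mem_biUnion.mp hj
    rw [Finset.mem_Icc] at hσ
    exact Finset.mem_biUnion.mpr ⟨σ, Finset.mem_Icc.mpr ⟨by omega, hσ.2⟩, hjS⟩
  have hcard : ∀ k, k ≤ n2 → (R (T + k)).card ≤ n2 - k := by
    intro k
    induction k with
    | zero => intro _; simpa using Finset.card_le_card (hRV2 T)
    | succ k ih =>
      intro hk
      have hT1 : T + k + 1 ≤ t := by omega
      by_cases hemp : R (T + k + 1) = ∅
      · rw [show T + (k+1) = T + k + 1 from rfl, hemp]; simp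
      · have hne' : (R (T + k + 1)).Nonempty := Finset.nonempty_iff_ne_empty.mpr hemp
        have hsub := hRmono (T + k)
        have hlt : (R (T + k + 1)).card < (R (T + k)).card := by
          rcases (Finset.card_le_card hsub).lt_or_eq with h | h
          · exact h
          · exfalso
            have heq : R (T + k + 1) = R (T + k) :=
              Finset.eq_of_subset_of_card_le hsub (le_of_eq h.symm)
            apply hnocoh (R (T + k)) (hRV2 _) (heq ▸ hne')
            intro i hiM
            exact keyR (T + k) (by omega) hT1 i (heq.symm ▸ hiM)
        have := ih (by omega)
        show (R (T + k + 1)).card ≤ n2 - (k + 1)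
        omega
  have hRt : R t = ∅ := by
    have h0 := hcard n2 le_rfl
    have hTt : T + n2 = t := by omega
    rw [hTt] at h0
    exact Finset.card_eq_zero.mp (by omega)
  by_contra hc
  push_neg at hc
  have hiS : i ∈ S t := Finset.mem_filter.mpr ⟨hi, hc⟩
  have hiR : i ∈ R t := Finset.mem_biUnion.mpr ⟨t, Finset.mem_Icc.mpr ⟨le_rfl, le_rfl⟩, hiS⟩
  rw [hRt] at hiR
  exact absurd hiR (Finset.notMem_empty i)

/-- Lemma 7: if no nonempty subset of `V2` is cohesive, then for
`t ≥ n₂` the opinion of every unprejudiced agent at time `t` lies between the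
extremes of the prejudiced agents' opinions over times `t - n₂, …, t - 1`. -/
theorem unprejudiced_bounded_by_prejudiced (n : ℕ) (W : Matrix (Fin n) (Fin n) ℝ)
    (hW : RowStochastic W) (Med : (Fin n → ℝ) → Fin n → ℝ)
    (hMed : IsMedianSelection W Med)
    (V1 V2 : Finset (Fin n)) (hdisj : Disjoint V1 V2)
    (hunion : V1 ∪ V2 = Finset.univ) (hV1 : V1.Nonempty) (hV2 : V2.Nonempty)
    (lam : Fin n → ℝ) (hlam : ∀ i ∈ V1, lam i ∈ Set.Ioc (0 : ℝ) 1) (u : ℝ)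
    (x : ℕ → Fin n → ℝ)
    (hdyn1 : ∀ t : ℕ, ∀ i ∈ V1, x (t + 1) i = lam i * u + (1 - lam i) * Med (x t) i)
    (hdyn2 : ∀ t : ℕ, ∀ i ∈ V2, x (t + 1) i = Med (x t) i)
    (hnocoh : ∀ M : Finset (Fin n), M ⊆ V2 → M.Nonempty →
      ¬ ∀ i ∈ M, 1 / 2 ≤ ∑ j ∈ M, W i j) :
    ∀ i ∈ V2, ∀ t : ℕ, ∀ ht : V2.card ≤ t,
      (V1 ×ˢ Finset.Icc (t - V2.card) (t - 1)).inf'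
          (hV1.product (Finset.nonempty_Icc.mpr (by have := hV2.card_pos; omega)))
          (fun p => x p.2 p.1) ≤ x t i ∧
      x t i ≤ (V1 ×ˢ Finset.Icc (t - V2.card) (t - 1)).sup'
          (hV1.product (Finset.nonempty_Icc.mpr (by have := hV2.card_pos; omega)))
          (fun p => x p.2 p.1) := by
  have hmedx : ∀ t : ℕ, ∀ i ∈ V2, IsWeightedMedian (W i) (x t) (x (t + 1) i) := by
    intro t i hi
    rw [hdyn2 t i hi]
    exact (hMed (x t) i).1
  intro i hi t ht
  have hn2 : 0 < V2.card := hV2.card_pos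
  have hne : (V1 ×ˢ Finset.Icc (t - V2.card) (t - 1)).Nonempty :=
    hV1.product (Finset.nonempty_Icc.mpr (by omega))
  constructor
  · have h := aux_upper W hW V1 V2 hunion (fun s j => -(x s j))
      (fun s j hj => neg_median _ _ _ (hmedx s j hj)) hnocoh i hi t ht hn2 hne
    obtain ⟨b, hb, hbeq⟩ := Finset.exists_mem_eq_sup' hne (fun p : Fin n × ℕ => -(x p.2 p.1))
    rw [hbeq] at h
    have h1 : x b.2 b.1 ≤ x t i := by linarith
    exact le_trans (Finset.inf'_le (fun p : Fin n × ℕ => x p.2 p.1) hb) h1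
  · exact aux_upper W hW V1 V2 hunion x hmedx hnocoh i hi t ht hn2 hne
end

section
/- (Lemma 8 of the paper.) Consider the partial-prejudice weighted-median dynamics on V = V1 ∪ V2 with common prejudice u ∈ ℝ, and let x(·) be a trajectory. (i) If there exists T ≥ 0 such that u ≤ max_{i ∈ V} x_i(t) for every t ≥ T, then the function t ↦ max_{i ∈ V} x_i(t) is monotonically non-increasing for t ≥ T. (ii) If there exists T ≥ 0 such that u ≥ min_{i ∈ V} x_i(t) for every t ≥ T, then the function t ↦ min_{i ∈ V} x_i(t) is monotonically non-decreasing for t ≥ T. -/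
open Finset Filter

/-- The maximal entry of a vector (`n > 0`). -/
noncomputable def vecMax {n : ℕ} (hn : 0 < n) (x : Fin n → ℝ) : ℝ :=
  Finset.univ.sup' ⟨⟨0, hn⟩, Finset.mem_univ _⟩ x

/-- The minimal entry of a vector (`n > 0`). -/
noncomputable def vecMin {n : ℕ} (hn : 0 < n) (x : Fin n → ℝ) : ℝ :=
  Finset.univ.inf' ⟨⟨0, hn⟩, Finset.mem_univ _⟩ x

/-- Lemma 8: (i) if `u ≤ max_i xᵢ(t)` for all `t ≥ T` then
`max_i xᵢ(t)` is non-increasing for `t ≥ T`; (ii) if `u ≥ min_i xᵢ(t)` for all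
`t ≥ T` then `min_i xᵢ(t)` is non-decreasing for `t ≥ T`. -/
theorem max_min_monotone (n : ℕ) (hn : 0 < n) (W : Matrix (Fin n) (Fin n) ℝ)
    (hW : RowStochastic W) (Med : (Fin n → ℝ) → Fin n → ℝ)
    (hMed : IsMedianSelection W Med)
    (V1 V2 : Finset (Fin n)) (hdisj : Disjoint V1 V2)
    (hunion : V1 ∪ V2 = Finset.univ) (hV1 : V1.Nonempty) (hV2 : V2.Nonempty)
    (lam : Fin n → ℝ) (hlam : ∀ i ∈ V1, lam i ∈ Set.Ioc (0 : ℝ) 1) (u : ℝ)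
    (x : ℕ → Fin n → ℝ)
    (hdyn1 : ∀ t : ℕ, ∀ i ∈ V1, x (t + 1) i = lam i * u + (1 - lam i) * Med (x t) i)
    (hdyn2 : ∀ t : ℕ, ∀ i ∈ V2, x (t + 1) i = Med (x t) i) :
    (∀ T : ℕ, (∀ t, T ≤ t → u ≤ vecMax hn (x t)) →
      ∀ s t : ℕ, T ≤ s → s ≤ t → vecMax hn (x t) ≤ vecMax hn (x s)) ∧
    (∀ T : ℕ, (∀ t, T ≤ t → vecMin hn (x t) ≤ u) →
      ∀ s t : ℕ, T ≤ s → s ≤ t → vecMin hn (x s) ≤ vecMin hn (x t)) := by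
  have hmem : ∀ i, i ∉ V1 → i ∈ V2 := by
    intro i hi
    have := Finset.mem_univ i
    rw [← hunion, Finset.mem_union] at this
    exact this.resolve_left hi
  constructor
  · intro T hu s t hTs hst
    induction t, hst using Nat.le_induction with
    | base => exact le_rfl
    | succ t hst ih =>
      refine le_trans ?_ ih
      show Finset.univ.sup' _ (x (t+1)) ≤ vecMax hn (x t)
      apply Finset.sup'_le
      intro i _
      have hmed : Med (x t) i ≤ vecMax hn (x t) := by
        obtain ⟨j, hj⟩ := (hMed (x t) i).1.1
        rw [← hj]; exact Finset.le_sup' (x t) (Finset.mem_univ j)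
      by_cases hi : i ∈ V1
      · rw [hdyn1 t i hi]
        have hl := hlam i hi
        have hu' : u ≤ vecMax hn (x t) := hu t (hTs.trans hst)
        nlinarith [hl.1, hl.2]
      · rw [hdyn2 t i (hmem i hi)]; exact hmed
  · intro T hu s t hTs hst
    induction t, hst using Nat.le_induction with
    | base => exact le_rfl
    | succ t hst ih =>
      refine le_trans ih ?_
      show vecMin hn (x t) ≤ Finset.univ.inf' _ (x (t+1))
      apply Finset.le_inf'
      intro i _
      have hmed : vecMin hn (x t) ≤ Med (x t) i := by
        obtain ⟨j, hj⟩ := (hMed (x t) i).1.1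
        rw [← hj]; exact Finset.inf'_le (x t) (Finset.mem_univ j)
      by_cases hi : i ∈ V1
      · rw [hdyn1 t i hi]
        have hl := hlam i hi
        have hu' : vecMin hn (x t) ≤ u := hu t (hTs.trans hst)
        nlinarith [hl.1, hl.2]
      · rw [hdyn2 t i (hmem i hi)]; exact hmed
end

section
/- (Lemma 9 of the paper.) Consider the partial-prejudice weighted-median dynamics on V = V1 ∪ V2 with common prejudice u ∈ ℝ, and let x(·) be a trajectory. (i) If there exists T ≥ 0 such that u ≤ min_{i ∈ V} x_i(T), then u ≤ min_{i ∈ V} x_i(t) for all t ≥ T, and the function t ↦ max_{i ∈ V} x_i(t) is monotonically non-increasing for t ≥ T. (ii) If there exists T ≥ 0 such that u ≥ max_{i ∈ V} x_i(T), then u ≥ max_{i ∈ V} x_i(t) for all t ≥ T, and the function t ↦ min_{i ∈ V} x_i(t) is monotonically non-decreasing for t ≥ T. -/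
open Finset Filter

/-- Lemma 9: (i) if `u ≤ min_i xᵢ(T)` then `u ≤ min_i xᵢ(t)` for all
`t ≥ T` and `max_i xᵢ(t)` is non-increasing for `t ≥ T`; (ii) symmetrically. -/
theorem bounded_prejudice_monotone (n : ℕ) (hn : 0 < n) (W : Matrix (Fin n) (Fin n) ℝ)
    (hW : RowStochastic W) (Med : (Fin n → ℝ) → Fin n → ℝ)
    (hMed : IsMedianSelection W Med)
    (V1 V2 : Finset (Fin n)) (hdisj : Disjoint V1 V2)
    (hunion : V1 ∪ V2 = Finset.univ) (hV1 : V1.Nonempty) (hV2 : V2.Nonempty)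
    (lam : Fin n → ℝ) (hlam : ∀ i ∈ V1, lam i ∈ Set.Ioc (0 : ℝ) 1) (u : ℝ)
    (x : ℕ → Fin n → ℝ)
    (hdyn1 : ∀ t : ℕ, ∀ i ∈ V1, x (t + 1) i = lam i * u + (1 - lam i) * Med (x t) i)
    (hdyn2 : ∀ t : ℕ, ∀ i ∈ V2, x (t + 1) i = Med (x t) i) :
    (∀ T : ℕ, u ≤ vecMin hn (x T) →
      (∀ t, T ≤ t → u ≤ vecMin hn (x t)) ∧
      ∀ s t : ℕ, T ≤ s → s ≤ t → vecMax hn (x t) ≤ vecMax hn (x s)) ∧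
    (∀ T : ℕ, vecMax hn (x T) ≤ u →
      (∀ t, T ≤ t → vecMax hn (x t) ≤ u) ∧
      ∀ s t : ℕ, T ≤ s → s ≤ t → vecMin hn (x s) ≤ vecMin hn (x t)) := by
  have hmem : ∀ (y : Fin n → ℝ) (i : Fin n), ∃ j, y j = Med y i := fun y i => ((hMed y i).1).1
  have hminM : ∀ (y : Fin n → ℝ) (i : Fin n), vecMin hn y ≤ Med y i := by
    intro y i
    obtain ⟨j, hj⟩ := hmem y i
    rw [← hj]; exact Finset.inf'_le _ (Finset.mem_univ j)
  have hmaxM : ∀ (y : Fin n → ℝ) (i : Fin n), Med y i ≤ vecMax hn y := by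
    intro y i
    obtain ⟨j, hj⟩ := hmem y i
    rw [← hj]; exact Finset.le_sup' _ (Finset.mem_univ j)
  have hcover : ∀ i : Fin n, i ∈ V1 ∨ i ∈ V2 := by
    intro i
    have : i ∈ V1 ∪ V2 := hunion ▸ Finset.mem_univ i
    exact Finset.mem_union.mp this
  have hminmax : ∀ t : ℕ, vecMin hn (x t) ≤ vecMax hn (x t) := by
    intro t
    exact (Finset.inf'_le _ (Finset.mem_univ (⟨0, hn⟩ : Fin n))).trans
      (Finset.le_sup' _ (Finset.mem_univ (⟨0, hn⟩ : Fin n)))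
  have step1 : ∀ t, u ≤ vecMin hn (x t) →
      u ≤ vecMin hn (x (t + 1)) ∧ vecMax hn (x (t + 1)) ≤ vecMax hn (x t) := by
    intro t ht
    have hb : ∀ i : Fin n, u ≤ x (t + 1) i ∧ x (t + 1) i ≤ vecMax hn (x t) := by
      intro i
      have h1 := hminM (x t) i
      have h2 := hmaxM (x t) i
      have huM : u ≤ Med (x t) i := ht.trans h1
      have huMax : u ≤ vecMax hn (x t) := ht.trans (hminmax t)
      rcases hcover i with hi | hi
      · obtain ⟨hl0, hl1⟩ := hlam i hi
        rw [hdyn1 t i hi]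
        constructor <;> nlinarith
      · rw [hdyn2 t i hi]
        exact ⟨huM, h2⟩
    constructor
    · exact Finset.le_inf' _ _ fun i _ => (hb i).1
    · exact Finset.sup'_le _ _ fun i _ => (hb i).2
  have step2 : ∀ t, vecMax hn (x t) ≤ u →
      vecMax hn (x (t + 1)) ≤ u ∧ vecMin hn (x t) ≤ vecMin hn (x (t + 1)) := by
    intro t ht
    have hb : ∀ i : Fin n, x (t + 1) i ≤ u ∧ vecMin hn (x t) ≤ x (t + 1) i := by
      intro i
      have h1 := hminM (x t) i
      have h2 := hmaxM (x t) i
      have huM : Med (x t) i ≤ u := h2.trans ht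
      have huMin : vecMin hn (x t) ≤ u := (hminmax t).trans ht
      rcases hcover i with hi | hi
      · obtain ⟨hl0, hl1⟩ := hlam i hi
        rw [hdyn1 t i hi]
        constructor <;> nlinarith
      · rw [hdyn2 t i hi]
        exact ⟨huM, h1⟩
    constructor
    · exact Finset.sup'_le _ _ fun i _ => (hb i).1
    · exact Finset.le_inf' _ _ fun i _ => (hb i).2
  constructor
  · intro T hT
    have hall : ∀ t, T ≤ t → u ≤ vecMin hn (x t) := by
      intro t ht
      induction t, ht using Nat.le_induction with
      | base => exact hT
      | succ m hm ih => exact (step1 m ih).1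
    refine ⟨hall, fun s t hs hst => ?_⟩
    induction t, hst using Nat.le_induction with
    | base => exact le_refl _
    | succ m hm ih => exact ((step1 m (hall m (hs.trans hm))).2).trans ih
  · intro T hT
    have hall : ∀ t, T ≤ t → vecMax hn (x t) ≤ u := by
      intro t ht
      induction t, ht using Nat.le_induction with
      | base => exact hT
      | succ m hm ih => exact (step2 m ih).1
    refine ⟨hall, fun s t hs hst => ?_⟩
    induction t, hst using Nat.le_induction with
    | base => exact le_refl _
    | succ m hm ih => exact ih.trans (step2 m (hall m (hs.trans hm))).2
end

section
/- (Lemma 10(i) of the paper.) Consider the partial-prejudice weighted-median dynamics on V = V1 ∪ V2 with common prejudice u ∈ ℝ and n2 = |V2|, and set λ_min := min_{i ∈ V1} λ_i. Assume G(W) does not contain a cohesive set consisting of unprejudiced agents only (no nonempty subset of V2 is cohesive). If there exists T ≥ 0 such that t ↦ max_{i ∈ V} x_i(t) is monotonically non-increasing for t ≥ T, then for every i ∈ V1, every integer K ≥ 1, and every t ≥ (K − 1)(n2 + 1) + T + 1: x_i(t) − u ≤ (1 − λ_min)^K · (max_{j ∈ V} x_j(T) − u). -/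
open Finset Filter

/-- Lemma 10(i): geometric decay of the prejudiced agents'
opinions towards `u` from above. -/
theorem prejudiced_geometric_decay_above (n : ℕ) (hn : 0 < n)
    (W : Matrix (Fin n) (Fin n) ℝ) (hW : RowStochastic W)
    (Med : (Fin n → ℝ) → Fin n → ℝ) (hMed : IsMedianSelection W Med)
    (V1 V2 : Finset (Fin n)) (hdisj : Disjoint V1 V2)
    (hunion : V1 ∪ V2 = Finset.univ) (hV1 : V1.Nonempty) (hV2 : V2.Nonempty)
    (lam : Fin n → ℝ) (hlam : ∀ i ∈ V1, lam i ∈ Set.Ioc (0 : ℝ) 1) (u : ℝ)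
    (x : ℕ → Fin n → ℝ)
    (hdyn1 : ∀ t : ℕ, ∀ i ∈ V1, x (t + 1) i = lam i * u + (1 - lam i) * Med (x t) i)
    (hdyn2 : ∀ t : ℕ, ∀ i ∈ V2, x (t + 1) i = Med (x t) i)
    (hnocoh : ∀ M : Finset (Fin n), M ⊆ V2 → M.Nonempty →
      ¬ ∀ i ∈ M, 1 / 2 ≤ ∑ j ∈ M, W i j)
    (T : ℕ) (hmono : ∀ s t : ℕ, T ≤ s → s ≤ t → vecMax hn (x t) ≤ vecMax hn (x s)) :
    ∀ i ∈ V1, ∀ K : ℕ, 1 ≤ K → ∀ t : ℕ, (K - 1) * (V2.card + 1) + T + 1 ≤ t →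
      x t i - u ≤ (1 - V1.inf' hV1 lam) ^ K * (vecMax hn (x T) - u) := by
  classical
  obtain ⟨hWnn, hWrow⟩ := hW
  intro i hi K hK t ht
  set n2 := V2.card with hn2
  set lm := V1.inf' hV1 lam with hlm
  obtain ⟨i0, hi0, hi0eq⟩ := Finset.exists_mem_eq_inf' hV1 lam
  have hlmmem : lm ∈ Set.Ioc (0:ℝ) 1 := by rw [hlm, hi0eq]; exact hlam i0 hi0
  set r := 1 - lm with hrdef
  have hr0 : 0 ≤ r := by have := hlmmem.2; rw [hrdef]; linarith
  have hr1 : r < 1 := by have := hlmmem.1; rw [hrdef]; linarith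
  set c := vecMax hn (x T) - u with hcdef
  have hxle : ∀ s j, x s j ≤ vecMax hn (x s) := fun s j => Finset.le_sup' _ (Finset.mem_univ j)
  have hmaxle : ∀ s, T ≤ s → vecMax hn (x s) ≤ u + c := by
    intro s hs
    have := hmono T s le_rfl hs
    rw [hcdef]; linarith
  obtain ⟨A, hA⟩ : ∃ A, (K-1) * (n2+1) = A := ⟨_, rfl⟩
  rw [hA] at ht
  by_cases hcneg : c < 0
  · have h1 : x t i ≤ u + c := le_trans (hxle t i) (hmaxle t (by omega))
    have hrK : r ^ K ≤ 1 := pow_le_one₀ hr0 hr1.le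
    have hrK0 : 0 ≤ r ^ K := pow_nonneg hr0 K
    nlinarith [mul_nonneg (by linarith : (0:ℝ) ≤ 1 - r^K) (by linarith : (0:ℝ) ≤ -c)]
  have hc0 : 0 ≤ c := not_lt.mp hcneg
  -- one-step contraction for prejudiced agents
  have hV1step : ∀ B : ℝ, u ≤ B → ∀ s : ℕ, (∀ j, x s j ≤ B) → ∀ i' ∈ V1,
      x (s+1) i' ≤ u + r * (B - u) := by
    intro B hB s hs i' hi'
    obtain ⟨k, hk⟩ := ((hMed (x s) i').1).1
    have hMle : Med (x s) i' ≤ B := hk ▸ hs k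
    have hl := hlam i' hi'
    have hlmle : lm ≤ lam i' := Finset.inf'_le lam hi'
    rw [hdyn1 s i' hi', hrdef]
    nlinarith [mul_nonneg (by linarith [hl.2] : (0:ℝ) ≤ 1 - lam i')
        (by linarith : (0:ℝ) ≤ B - Med (x s) i'),
      mul_nonneg (by linarith : (0:ℝ) ≤ lam i' - lm) (by linarith : (0:ℝ) ≤ B - u)]
  -- main induction
  have hH : ∀ k : ℕ, ∀ s : ℕ, T + k * (n2 + 1) ≤ s → ∀ j, x s j ≤ u + r ^ k * c := by
    intro k
    induction k with
    | zero =>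
      intro s hs j
      have h1 := le_trans (hxle s j) (hmaxle s (by omega))
      simpa using h1
    | succ k ih =>
      obtain ⟨s0, hs0def⟩ : ∃ s0, T + k * (n2+1) = s0 := ⟨_, rfl⟩
      rw [hs0def] at ih
      have hTs0 : T ≤ s0 := hs0def ▸ Nat.le_add_right T _
      have hsucc : T + (k+1) * (n2+1) = s0 + (n2+1) := by rw [← hs0def]; ring
      have hrk0 : 0 ≤ r ^ k * c := mul_nonneg (pow_nonneg hr0 k) hc0
      have hrk10 : 0 ≤ r ^ (k+1) * c := mul_nonneg (pow_nonneg hr0 _) hc0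
      set β := u + r ^ (k+1) * c with hβdef
      have hV1β : ∀ s, s0 + 1 ≤ s → ∀ i' ∈ V1, x s i' ≤ β := by
        intro s hs i' hi'
        obtain ⟨s', rfl⟩ : ∃ s', s = s' + 1 := ⟨s - 1, by omega⟩
        have h1 := hV1step (u + r ^ k * c) (by linarith) s' (ih s' (by omega)) i' hi'
        have h2 : u + r * (u + r ^ k * c - u) = β := by rw [hβdef]; ring
        linarith
      set S : ℕ → Finset (Fin n) := fun s => Finset.univ.filter (fun j => β < x s j) with hSdef
      have hSmem : ∀ s j, j ∈ S s ↔ β < x s j := by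
        intro s j; simp [hSdef]
      have hSV2 : ∀ s, s0 + 1 ≤ s → S s ⊆ V2 := by
        intro s hs j hj
        have hju : j ∈ V1 ∪ V2 := by rw [hunion]; exact Finset.mem_univ j
        rcases Finset.mem_union.mp hju with h1 | h2
        · exact absurd (hV1β s hs j h1) (not_le.mpr ((hSmem s j).mp hj))
        · exact h2
      have hShalf : ∀ s, s0 ≤ s → ∀ j ∈ S (s+1), 1/2 ≤ ∑ k' ∈ S s, W j k' := by
        intro s hs j hj
        have hjx : β < x (s+1) j := (hSmem _ _).mp hj
        have hjV2 : j ∈ V2 := hSV2 (s+1) (by omega) hj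
        have hmed := hdyn2 s j hjV2
        have hβm : β < Med (x s) j := hmed ▸ hjx
        have hlow := ((hMed (x s) j).1).2.1
        have htot : ∑ k', W j k' = 1 := hWrow j
        have hsplit := Finset.sum_filter_add_sum_filter_not Finset.univ
          (fun k' => x s k' < Med (x s) j) (fun k' => W j k')
        have hhigh : 1/2 ≤ ∑ k' ∈ Finset.univ.filter (fun k' => ¬ x s k' < Med (x s) j), W j k' := by
          rw [htot] at hsplit
          linarith
        refine le_trans hhigh (Finset.sum_le_sum_of_subset_of_nonneg ?_ ?_)
        · intro k' hk'
          have h1 : ¬ x s k' < Med (x s) j := (Finset.mem_filter.mp hk').2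
          have h2 : β < x s k' := lt_of_lt_of_le hβm (not_lt.mp h1)
          exact (hSmem s k').mpr h2
        · intro k' _ _; exact hWnn j k'
      obtain ⟨C, hC0, hCs⟩ : ∃ C : ℕ → Finset (Fin n), C 0 = V2 ∧
          ∀ m, C (m+1) = V2.filter (fun i' => 1/2 ≤ ∑ j ∈ C m, W i' j) :=
        ⟨fun m => Nat.rec V2 (fun _ Cm => V2.filter (fun i' => 1/2 ≤ ∑ j ∈ Cm, W i' j)) m,
          rfl, fun m => rfl⟩
      have hCV2 : ∀ m, C m ⊆ V2 := by
        intro m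
        cases m with
        | zero => rw [hC0]
        | succ m => rw [hCs]; exact Finset.filter_subset _ _
      have hCmono : ∀ m, C (m+1) ⊆ C m := by
        intro m
        induction m with
        | zero => rw [hC0]; exact hCV2 1
        | succ m ihm =>
          intro j hj
          rw [hCs] at hj ⊢
          obtain ⟨hjV2, hjs⟩ := Finset.mem_filter.mp hj
          exact Finset.mem_filter.mpr ⟨hjV2, le_trans hjs
            (Finset.sum_le_sum_of_subset_of_nonneg ihm (fun k' _ _ => hWnn j k'))⟩
      have hCstrict : ∀ m, (C (m+1)).Nonempty → (C (m+1)).card < (C m).card := by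
        intro m hne
        by_contra hle
        push_neg at hle
        have heq : C (m+1) = C m := Finset.eq_of_subset_of_card_le (hCmono m) hle
        have hne' : (C m).Nonempty := heq ▸ hne
        refine hnocoh (C m) (hCV2 m) hne' (fun i' hi' => ?_)
        have hmem : i' ∈ C (m+1) := heq ▸ hi'
        rw [hCs] at hmem
        exact (Finset.mem_filter.mp hmem).2
      have hcard : ∀ m, (C m).Nonempty → (C m).card + m ≤ n2 := by
        intro m
        induction m with
        | zero =>
          intro _
          rw [hC0]
          omega
        | succ m ihm =>
          intro hne
          have hne' : (C m).Nonempty := hne.mono (hCmono m)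
          have h1 := ihm hne'
          have h2 := hCstrict m hne
          omega
      have hCempty : C n2 = ∅ := by
        by_contra hne
        have hnem : (C n2).Nonempty := Finset.nonempty_iff_ne_empty.mpr hne
        have := hcard n2 hnem
        have := Finset.card_pos.mpr hnem
        omega
      have hSC : ∀ m, S (s0 + 1 + m) ⊆ C m := by
        intro m
        induction m with
        | zero => rw [hC0]; exact hSV2 (s0+1) le_rfl
        | succ m ihm =>
          intro j hj
          have hj' : j ∈ S ((s0 + 1 + m) + 1) := by
            have he : s0 + 1 + (m+1) = (s0+1+m)+1 := by ring
            rwa [he] at hj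
          have hjV2 : j ∈ V2 := hSV2 _ (by omega) hj'
          have hhalf := hShalf (s0+1+m) (by omega) j hj'
          rw [hCs]
          exact Finset.mem_filter.mpr ⟨hjV2, le_trans hhalf
            (Finset.sum_le_sum_of_subset_of_nonneg ihm (fun k' _ _ => hWnn j k'))⟩
      intro s hs j
      rw [hsucc] at hs
      have hfin : ∀ j', x (s0 + 1 + n2) j' ≤ β := by
        intro j'
        by_contra hgt
        push_neg at hgt
        have hmem : j' ∈ S (s0+1+n2) := (hSmem _ _).mpr hgt
        have hmem2 := hSC n2 hmem
        rw [hCempty] at hmem2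
        exact absurd hmem2 (Finset.notMem_empty j')
      have hM : vecMax hn (x (s0+1+n2)) ≤ β := Finset.sup'_le _ _ (fun j' _ => hfin j')
      have hmono2 : vecMax hn (x s) ≤ vecMax hn (x (s0+1+n2)) :=
        hmono (s0+1+n2) s (by omega) (by omega)
      exact le_trans (hxle s j) (le_trans hmono2 hM)
  have hHK := hH (K-1)
  rw [hA] at hHK
  have hBall : ∀ j, x (t-1) j ≤ u + r ^ (K-1) * c := hHK (t-1) (by omega)
  have hstep := hV1step (u + r^(K-1)*c)
    (by nlinarith [mul_nonneg (pow_nonneg hr0 (K-1)) hc0]) (t-1) hBall i hi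
  have ht1 : t - 1 + 1 = t := by omega
  rw [ht1] at hstep
  have hpow : u + r * (u + r^(K-1)*c - u) = u + r ^ K * c := by
    have hK1 : K - 1 + 1 = K := by omega
    calc u + r * (u + r^(K-1)*c - u) = u + r ^ (K-1+1) * c := by ring
      _ = u + r ^ K * c := by rw [hK1]
  rw [hpow] at hstep
  linarith
end

section
/- (Theorem 2, sufficiency.) Consider the partial-prejudice weighted-median dynamics on V = V1 ∪ V2 with common prejudice u ∈ ℝ. If G(W) does not contain a cohesive set consisting of unprejudiced agents only (no nonempty subset of V2 is cohesive), then for every median selection Med(·;W) and every initial state x(0) ∈ ℝ^n, the trajectory achieves asymptotic consensus; moreover lim_{t→∞} x_i(t) = u for every i ∈ V. -/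
open Finset Filter

open Classical in
/-- Iterated "half-weight into the previous set" refinement of `V2`. -/
noncomputable def Rset {n : ℕ} (W : Matrix (Fin n) (Fin n) ℝ) (V2 : Finset (Fin n)) :
    ℕ → Finset (Fin n)
  | 0 => V2
  | k + 1 => V2.filter (fun i => 1 / 2 ≤ ∑ j ∈ Rset W V2 k, W i j)

lemma Rset_zero {n : ℕ} (W : Matrix (Fin n) (Fin n) ℝ) (V2 : Finset (Fin n)) :
    Rset W V2 0 = V2 := rfl

open Classical in
lemma Rset_succ {n : ℕ} (W : Matrix (Fin n) (Fin n) ℝ) (V2 : Finset (Fin n)) (k : ℕ) :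
    Rset W V2 (k + 1) = V2.filter (fun i => 1 / 2 ≤ ∑ j ∈ Rset W V2 k, W i j) := rfl

lemma Rset_subset {n : ℕ} (W : Matrix (Fin n) (Fin n) ℝ) (V2 : Finset (Fin n)) (k : ℕ) :
    Rset W V2 k ⊆ V2 := by
  cases k with
  | zero => exact Finset.Subset.refl _
  | succ k => rw [Rset_succ]; exact Finset.filter_subset _ _

lemma Rset_anti {n : ℕ} (W : Matrix (Fin n) (Fin n) ℝ) (V2 : Finset (Fin n))
    (hWnn : ∀ i j, 0 ≤ W i j) (k : ℕ) : Rset W V2 (k + 1) ⊆ Rset W V2 k := by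
  induction k with
  | zero => exact Rset_subset W V2 1
  | succ k ih =>
    intro i hi
    rw [Rset_succ] at hi ⊢
    classical
    rw [Finset.mem_filter] at hi ⊢
    refine ⟨hi.1, le_trans hi.2 ?_⟩
    exact Finset.sum_le_sum_of_subset_of_nonneg ih (fun j _ _ => hWnn i j)

lemma Rset_card_empty {n : ℕ} (W : Matrix (Fin n) (Fin n) ℝ) (V2 : Finset (Fin n))
    (hWnn : ∀ i j, 0 ≤ W i j)
    (hnocoh : ∀ M : Finset (Fin n), M ⊆ V2 → M.Nonempty →
      ¬ ∀ i ∈ M, 1 / 2 ≤ ∑ j ∈ M, W i j) :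
    Rset W V2 V2.card = ∅ := by
  classical
  have hkey : ∀ k, (Rset W V2 k).Nonempty → (Rset W V2 k).card + k ≤ V2.card := by
    intro k
    induction k with
    | zero => intro _; simp [Rset_zero]
    | succ k ih =>
      intro hne
      have hsub : Rset W V2 (k + 1) ⊆ Rset W V2 k := Rset_anti W V2 hWnn k
      have hkne : (Rset W V2 k).Nonempty := hne.mono hsub
      have hneq : Rset W V2 (k + 1) ≠ Rset W V2 k := by
        intro heq
        apply hnocoh (Rset W V2 k) (Rset_subset W V2 k) hkne
        intro i hi
        have hi' : i ∈ Rset W V2 (k + 1) := heq ▸ hi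
        rw [Rset_succ, Finset.mem_filter] at hi'
        exact hi'.2
      have hlt : (Rset W V2 (k + 1)).card < (Rset W V2 k).card :=
        Finset.card_lt_card (lt_of_le_of_ne hsub hneq)
      have := ih hkne
      omega
  by_contra hne
  have hne' : (Rset W V2 V2.card).Nonempty := Finset.nonempty_of_ne_empty hne
  have := hkey V2.card hne'
  have := Finset.card_pos.mpr hne'
  omega

/-- Theorem 2, sufficiency: if no nonempty subset of `V2` is cohesive,
then every trajectory achieves asymptotic consensus, with common limit `u`. -/
theorem partial_prejudice_consensus_sufficiency (n : ℕ) (W : Matrix (Fin n) (Fin n) ℝ)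
    (hW : RowStochastic W)
    (V1 V2 : Finset (Fin n)) (hdisj : Disjoint V1 V2)
    (hunion : V1 ∪ V2 = Finset.univ) (hV1 : V1.Nonempty) (hV2 : V2.Nonempty)
    (lam : Fin n → ℝ) (hlam : ∀ i ∈ V1, lam i ∈ Set.Ioc (0 : ℝ) 1) (u : ℝ)
    (hnocoh : ∀ M : Finset (Fin n), M ⊆ V2 → M.Nonempty →
      ¬ ∀ i ∈ M, 1 / 2 ≤ ∑ j ∈ M, W i j) :
    ∀ Med : (Fin n → ℝ) → Fin n → ℝ, IsMedianSelection W Med →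
      ∀ x : ℕ → Fin n → ℝ,
        (∀ t : ℕ, ∀ i ∈ V1, x (t + 1) i = lam i * u + (1 - lam i) * Med (x t) i) →
        (∀ t : ℕ, ∀ i ∈ V2, x (t + 1) i = Med (x t) i) →
        (∃ c : ℝ, ∀ i, Filter.Tendsto (fun t => x t i) Filter.atTop (nhds c)) ∧
        ∀ i, Filter.Tendsto (fun t => x t i) Filter.atTop (nhds u) := by
  classical
  intro Med hMed x hx1 hx2
  obtain ⟨i0, hi0⟩ := hV1.exists_mem
  have hne : (Finset.univ : Finset (Fin n)).Nonempty := ⟨i0, Finset.mem_univ i0⟩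
  set D : ℕ → ℝ := fun t => Finset.univ.sup' hne (fun i => |x t i - u|) with hDdef
  have hxleD : ∀ t i, |x t i - u| ≤ D t := fun t i =>
    Finset.le_sup' (fun i => |x t i - u|) (Finset.mem_univ i)
  have hD0 : ∀ t, 0 ≤ D t := fun t => le_trans (abs_nonneg _) (hxleD t i0)
  set lmin : ℝ := V1.inf' hV1 lam with hlmdef
  have hlmin_pos : 0 < lmin := by
    rw [hlmdef, Finset.lt_inf'_iff]
    exact fun i hi => (hlam i hi).1
  have hlmin_le : ∀ i ∈ V1, lmin ≤ lam i := fun i hi => Finset.inf'_le lam hi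
  set θ : ℝ := 1 - lmin / 2 with hθdef
  have hlmin_le1 : lmin ≤ 1 := le_trans (hlmin_le i0 hi0) (hlam i0 hi0).2
  have hθ0 : 0 ≤ θ := by rw [hθdef]; linarith
  have hθ1 : θ < 1 := by rw [hθdef]; linarith
  -- membership split
  have hmem : ∀ i : Fin n, i ∈ V1 ∨ i ∈ V2 := by
    intro i
    have : i ∈ V1 ∪ V2 := by rw [hunion]; exact Finset.mem_univ i
    exact Finset.mem_union.mp this
  -- medians are bounded by D
  have hMedleD : ∀ t i, |Med (x t) i - u| ≤ D t := by
    intro t i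
    obtain ⟨j, hj⟩ := (hMed (x t) i).1.1
    rw [← hj]; exact hxleD t j
  -- one-step bound for prejudiced agents
  have hV1step : ∀ t, ∀ i ∈ V1, |x (t + 1) i - u| ≤ (1 - lam i) * D t := by
    intro t i hi
    rw [hx1 t i hi]
    have heq : lam i * u + (1 - lam i) * Med (x t) i - u
        = (1 - lam i) * (Med (x t) i - u) := by ring
    rw [heq, abs_mul, abs_of_nonneg (by linarith [(hlam i hi).2] : (0:ℝ) ≤ 1 - lam i)]
    exact mul_le_mul_of_nonneg_left (hMedleD t i) (by linarith [(hlam i hi).2])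
  -- one-step bound for everyone
  have hstep : ∀ t i, |x (t + 1) i - u| ≤ D t := by
    intro t i
    rcases hmem i with hi | hi
    · refine le_trans (hV1step t i hi) ?_
      have h1 : (1 : ℝ) - lam i ≤ 1 := by linarith [(hlam i hi).1]
      exact mul_le_of_le_one_left (hD0 t) h1
    · rw [hx2 t i hi]; exact hMedleD t i
  have hDmono : ∀ t, D (t + 1) ≤ D t := by
    intro t
    exact Finset.sup'_le hne _ (fun i _ => hstep t i)
  have hDmono' : ∀ t m, D (t + m) ≤ D t := by
    intro t m
    induction m with
    | zero => exact le_rfl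
    | succ m ih => exact le_trans (hDmono (t + m)) ih
  -- the contraction factor for prejudiced agents
  have hV1theta : ∀ t s, ∀ i ∈ V1, |x (t + s + 1) i - u| ≤ θ * D t := by
    intro t s i hi
    refine le_trans (hV1step (t + s) i hi) ?_
    have h1 : (1 : ℝ) - lam i ≤ θ := by
      have := hlmin_le i hi
      rw [hθdef]; linarith
    calc (1 - lam i) * D (t + s) ≤ (1 - lam i) * D t := by
          apply mul_le_mul_of_nonneg_left (hDmono' t s)
          linarith [(hlam i hi).2]
      _ ≤ θ * D t := mul_le_mul_of_nonneg_right h1 (hD0 t)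
  -- key propagation lemma
  have key : ∀ t k i, θ * D t < |x (t + 1 + k) i - u| → i ∈ Rset W V2 k := by
    intro t k
    induction k with
    | zero =>
      intro i h
      rw [Rset_zero]
      rcases hmem i with hi | hi
      · exfalso
        have := hV1theta t 0 i hi
        simp only [Nat.add_zero] at this h
        linarith
      · exact hi
    | succ k ih =>
      intro i h
      have hidx : t + 1 + (k + 1) = (t + 1 + k) + 1 := by omega
      rw [hidx] at h
      set s := t + 1 + k with hsdef
      have hiV2 : i ∈ V2 := by
        rcases hmem i with hi | hi
        · exfalso
          have := hV1theta t (1 + k) i hi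
          have hidx2 : t + (1 + k) + 1 = s + 1 := by omega
          rw [hidx2] at this
          linarith
        · exact hi
      have hxm : x (s + 1) i = Med (x s) i := hx2 s i hiV2
      obtain ⟨⟨j0, hj0⟩, hlt, hgt⟩ := (hMed (x s) i).1
      set m : ℝ := Med (x s) i with hmdef
      have habs : θ * D t < |m - u| := by rw [hxm] at h; exact h
      have hsum : ∑ j, W i j = 1 := hW.2 i
      have hmemR : 1 / 2 ≤ ∑ j ∈ Rset W V2 k, W i j := by
        rcases lt_abs.mp habs with hc | hc
        · -- m is above u + θ D t
          have hsplit :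
              (∑ j ∈ Finset.univ.filter (fun j => x s j < m), W i j)
                + ∑ j ∈ Finset.univ.filter (fun j => ¬ x s j < m), W i j = 1 := by
            rw [Finset.sum_filter_add_sum_filter_not]; exact hsum
          have hhalf : 1 / 2 ≤ ∑ j ∈ Finset.univ.filter (fun j => ¬ x s j < m), W i j := by
            linarith
          refine le_trans hhalf (Finset.sum_le_sum_of_subset_of_nonneg ?_
            (fun j _ _ => hW.1 i j))
          intro j hj
          rw [Finset.mem_filter] at hj
          have hj' : m ≤ x s j := not_lt.mp hj.2
          apply ih j
          have h1 : θ * D t < x s j - u := by linarith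
          exact lt_of_lt_of_le h1 (le_abs_self _)
        · -- m is below u - θ D t
          have hsplit :
              (∑ j ∈ Finset.univ.filter (fun j => m < x s j), W i j)
                + ∑ j ∈ Finset.univ.filter (fun j => ¬ m < x s j), W i j = 1 := by
            rw [Finset.sum_filter_add_sum_filter_not]; exact hsum
          have hhalf : 1 / 2 ≤ ∑ j ∈ Finset.univ.filter (fun j => ¬ m < x s j), W i j := by
            linarith
          refine le_trans hhalf (Finset.sum_le_sum_of_subset_of_nonneg ?_
            (fun j _ _ => hW.1 i j))
          intro j hj
          rw [Finset.mem_filter] at hj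
          have hj' : x s j ≤ m := not_lt.mp hj.2
          apply ih j
          have h1 : θ * D t < -(x s j - u) := by linarith
          exact lt_of_lt_of_le h1 (neg_le_abs _)
      rw [Rset_succ, Finset.mem_filter]
      exact ⟨hiV2, hmemR⟩
  have hRempty : Rset W V2 V2.card = ∅ := Rset_card_empty W V2 hW.1 hnocoh
  set N : ℕ := V2.card + 1 with hNdef
  have hcontract : ∀ t, D (t + N) ≤ θ * D t := by
    intro t
    apply Finset.sup'_le hne
    intro i _
    by_contra hcon
    push_neg at hcon
    have hidx : t + N = t + 1 + V2.card := by omega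
    rw [hidx] at hcon
    have := key t V2.card i hcon
    rw [hRempty] at this
    exact absurd this (Finset.notMem_empty i)
  have hpow : ∀ m : ℕ, D (m * N) ≤ θ ^ m * D 0 := by
    intro m
    induction m with
    | zero => simp
    | succ m ih =>
      have hidx : (m + 1) * N = m * N + N := by ring
      rw [hidx]
      calc D (m * N + N) ≤ θ * D (m * N) := hcontract (m * N)
        _ ≤ θ * (θ ^ m * D 0) := mul_le_mul_of_nonneg_left ih hθ0
        _ = θ ^ (m + 1) * D 0 := by ring
  have hNpos : 0 < N := Nat.succ_pos _
  have hDt : ∀ t, D t ≤ θ ^ (t / N) * D 0 := by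
    intro t
    have h1 : D t ≤ D (t / N * N) := by
      have heq : N * (t / N) + t % N = t := Nat.div_add_mod t N
      have h2 : D t ≤ D (N * (t / N)) := by
        calc D t = D (N * (t / N) + t % N) := by rw [heq]
          _ ≤ D (N * (t / N)) := hDmono' _ _
      rwa [Nat.mul_comm] at h2
    exact le_trans h1 (hpow _)
  have hdivtend : Filter.Tendsto (fun t : ℕ => t / N) Filter.atTop Filter.atTop := by
    apply Filter.tendsto_atTop_atTop.mpr
    intro b
    refine ⟨b * N, fun a ha => ?_⟩
    exact (Nat.le_div_iff_mul_le hNpos).mpr ha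
  have htendD : Filter.Tendsto (fun t : ℕ => θ ^ (t / N) * D 0) Filter.atTop (nhds 0) := by
    have h1 : Filter.Tendsto (fun m : ℕ => θ ^ m) Filter.atTop (nhds 0) :=
      tendsto_pow_atTop_nhds_zero_of_lt_one hθ0 hθ1
    have h2 := (h1.comp hdivtend).mul_const (D 0)
    simpa using h2
  have hxi : ∀ i, Filter.Tendsto (fun t => x t i) Filter.atTop (nhds u) := by
    intro i
    have habs : Filter.Tendsto (fun t => |x t i - u|) Filter.atTop (nhds 0) := by
      apply squeeze_zero (fun t => abs_nonneg _) (fun t => le_trans (hxleD t i) (hDt t)) htendD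
    rw [tendsto_iff_dist_tendsto_zero]
    simpa [Real.dist_eq] using habs
  exact ⟨⟨u, hxi⟩, hxi⟩
end

section
/- (Theorem 2, necessity.) Consider the partial-prejudice weighted-median dynamics on V = V1 ∪ V2 with common prejudice u ∈ ℝ. If G(W) contains a cohesive set M ⊆ V2 consisting of unprejudiced agents only, then there exists an initial state x(0) ∈ ℝ^n for which asymptotic consensus fails for every median selection Med(·;W): concretely, for any real number a > u, the initial state x(0) = (a, a, …, a) yields a trajectory with x_i(t) = a for every i ∈ M and t ∈ ℕ, while x_i(t) ≤ a − λ_i(a − u) < a for every i ∈ V1 and every t ≥ 1, so the opinions do not all converge to a common value. -/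
open Finset Filter

/-- Theorem 2, necessity: if there is a cohesive set `M ⊆ V2` of
unprejudiced agents, then for any `a > u` the constant initial state `a` yields a
trajectory with `xᵢ(t) = a` on `M`, `xᵢ(t) ≤ a - λᵢ (a - u)` on `V1` for `t ≥ 1`,
and asymptotic consensus fails. -/
theorem partial_prejudice_consensus_necessity (n : ℕ) (W : Matrix (Fin n) (Fin n) ℝ)
    (hW : RowStochastic W)
    (V1 V2 : Finset (Fin n)) (hdisj : Disjoint V1 V2)
    (hunion : V1 ∪ V2 = Finset.univ) (hV1 : V1.Nonempty) (hV2 : V2.Nonempty)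
    (lam : Fin n → ℝ) (hlam : ∀ i ∈ V1, lam i ∈ Set.Ioc (0 : ℝ) 1) (u : ℝ)
    (M : Finset (Fin n)) (hMne : M.Nonempty) (hMsub : M ⊆ V2)
    (hcoh : ∀ i ∈ M, 1 / 2 ≤ ∑ j ∈ M, W i j) :
    ∀ Med : (Fin n → ℝ) → Fin n → ℝ, IsMedianSelection W Med →
      ∀ a : ℝ, u < a →
        ∀ x : ℕ → Fin n → ℝ, (∀ i, x 0 i = a) →
          (∀ t : ℕ, ∀ i ∈ V1, x (t + 1) i = lam i * u + (1 - lam i) * Med (x t) i) →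
          (∀ t : ℕ, ∀ i ∈ V2, x (t + 1) i = Med (x t) i) →
          (∀ i ∈ M, ∀ t : ℕ, x t i = a) ∧
          (∀ i ∈ V1, ∀ t : ℕ, 1 ≤ t → x t i ≤ a - lam i * (a - u) ∧ x t i < a) ∧
          ¬ ∃ c : ℝ, ∀ i, Filter.Tendsto (fun t => x t i) Filter.atTop (nhds c) := by

  intro Med hMed a hua x hx0 hdyn1 hdyn2
  obtain ⟨hWpos, hWrow⟩ := hW
  -- main invariant
  have key : ∀ t : ℕ, (∀ j, x t j ≤ a) ∧ (∀ i ∈ M, x t i = a) := by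
    intro t
    induction t with
    | zero => exact ⟨fun j => le_of_eq (hx0 j), fun i _ => hx0 i⟩
    | succ t ih =>
      obtain ⟨hle, heq⟩ := ih
      have hMedle : ∀ i, Med (x t) i ≤ a := by
        intro i
        obtain ⟨⟨j, hj⟩, _⟩ := (hMed (x t) i).1
        exact hj ▸ hle j
      have hMedeq : ∀ i ∈ M, Med (x t) i = a := by
        intro i hi
        have ha_med : IsWeightedMedian (W i) (x t) a := by
          refine ⟨⟨i, heq i hi⟩, ?_, ?_⟩
          · have hdisjMF : Disjoint M (Finset.univ.filter (fun j => x t j < a)) := by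
              rw [Finset.disjoint_left]
              intro j hjM hjF
              rw [Finset.mem_filter] at hjF
              exact absurd (heq j hjM) (ne_of_lt hjF.2)
            have hsum : ∑ j ∈ M ∪ Finset.univ.filter (fun j => x t j < a), W i j ≤ 1 := by
              rw [← hWrow i]
              exact Finset.sum_le_sum_of_subset_of_nonneg (Finset.subset_univ _)
                (fun j _ _ => hWpos i j)
            rw [Finset.sum_union hdisjMF] at hsum
            have := hcoh i hi
            linarith
          · have hempty : Finset.univ.filter (fun j => a < x t j) = ∅ := by
              ext j
              simp only [Finset.mem_filter, Finset.mem_univ, true_and, Finset.notMem_empty,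
                iff_false]
              exact not_lt.mpr (hle j)
            rw [hempty]
            norm_num
        have hmin := (hMed (x t) i).2 a ha_med
        rw [heq i hi] at hmin
        simp only [sub_self, abs_zero] at hmin
        have := abs_nonneg (Med (x t) i - a)
        have : |Med (x t) i - a| = 0 := le_antisymm hmin this
        have := abs_eq_zero.mp this
        linarith
      constructor
      · intro j
        have hj : j ∈ V1 ∪ V2 := hunion ▸ Finset.mem_univ j
        rcases Finset.mem_union.mp hj with hj1 | hj2
        · rw [hdyn1 t j hj1]
          obtain ⟨hl0, hl1⟩ := hlam j hj1
          have h1 : (1 - lam j) * Med (x t) j ≤ (1 - lam j) * a :=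
            mul_le_mul_of_nonneg_left (hMedle j) (by linarith)
          nlinarith
        · rw [hdyn2 t j hj2]
          exact hMedle j
      · intro i hi
        rw [hdyn2 t i (hMsub hi)]
        exact hMedeq i hi
  have hMedle : ∀ t i, Med (x t) i ≤ a := by
    intro t i
    obtain ⟨⟨j, hj⟩, _⟩ := (hMed (x t) i).1
    exact hj ▸ (key t).1 j
  have hMconst : ∀ i ∈ M, ∀ t, x t i = a := fun i hi t => (key t).2 i hi
  have hV1bd : ∀ i ∈ V1, ∀ t : ℕ, 1 ≤ t → x t i ≤ a - lam i * (a - u) ∧ x t i < a := by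
    intro i hi t ht
    obtain ⟨s, rfl⟩ := Nat.exists_eq_add_of_le ht
    have hdef := hdyn1 (0 + s) i hi
    rw [show 0 + s + 1 = 1 + s by ring] at hdef
    obtain ⟨hl0, hl1⟩ := hlam i hi
    have h1 : (1 - lam i) * Med (x (0 + s)) i ≤ (1 - lam i) * a :=
      mul_le_mul_of_nonneg_left (hMedle _ i) (by linarith)
    constructor
    · rw [hdef]; nlinarith
    · rw [hdef]; nlinarith
  refine ⟨hMconst, hV1bd, ?_⟩
  rintro ⟨c, hc⟩
  obtain ⟨i0, hi0⟩ := hMne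
  obtain ⟨i1, hi1⟩ := hV1
  have hca : c = a := by
    have h1 : Filter.Tendsto (fun t => x t i0) Filter.atTop (nhds a) := by
      have : (fun t => x t i0) = fun _ => a := funext fun t => hMconst i0 hi0 t
      rw [this]; exact tendsto_const_nhds
    exact tendsto_nhds_unique (hc i0) h1
  have hcle : c ≤ a - lam i1 * (a - u) := by
    refine le_of_tendsto (hc i1) ?_
    filter_upwards [Filter.eventually_ge_atTop 1] with t ht
    exact (hV1bd i1 hi1 t ht).1
  obtain ⟨hl0, _⟩ := hlam i1 hi1
  nlinarith
end
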